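/- arXiv:cs/0604095 — 5 statements merged into one kernel-verified Lean document; each statement's English description precedes it below -/
import Mathlib

section
/- For any finite simple graph G, the profile prf(G) equals the minimum number of edges of an interval supergraph of G, i.e., the minimum of |E(H)| over all interval graphs H on the same vertex set with E(G) ⊆ E(H). -/
variable {V : Type*}

/-- The minimum position (in ordering `α`) over the closed neighborhood of `z`. -/
noncomputable def nbhdMin {n : ℕ} (G : SimpleGraph V) (α : V ≃ Fin n) (z : V) : ℕ :=
  sInf {m : ℕ | ∃ w, (w = z ∨ G.Adj w z) ∧ (α w : ℕ) = m}

/-- The profile of a vertex `z` in the ordering `α`. -/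
noncomputable def vtxProfile {n : ℕ} (G : SimpleGraph V) (α : V ≃ Fin n) (z : V) : ℕ :=
  (α z : ℕ) - nbhdMin G α z

/-- The profile of an ordering `α` of `G`. -/
noncomputable def ordProfile [Fintype V] {n : ℕ} (G : SimpleGraph V) (α : V ≃ Fin n) : ℕ :=
  ∑ z : V, vtxProfile G α z

/-- The profile of a graph `G`. -/
noncomputable def profile (G : SimpleGraph V) [Fintype V] : ℕ :=
  sInf {p : ℕ | ∃ α : V ≃ Fin (Fintype.card V), ordProfile G α = p}
/-- `H` is an interval graph: each vertex can be assigned a closed real interval so that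
distinct vertices are adjacent iff their intervals intersect. -/
def IsIntervalGraph (H : SimpleGraph V) : Prop :=
  ∃ a b : V → ℝ, (∀ v, a v ≤ b v) ∧
    ∀ x y : V, x ≠ y →
      (H.Adj x y ↔ (Set.Icc (a x) (b x) ∩ Set.Icc (a y) (b y)).Nonempty)

lemma nbhdMin_le {n : ℕ} (G : SimpleGraph V) (α : V ≃ Fin n) {w z : V}
    (h : w = z ∨ G.Adj w z) : nbhdMin G α z ≤ (α w : ℕ) :=
  Nat.sInf_le ⟨w, h, rfl⟩

lemma nbhdMin_mem {n : ℕ} (G : SimpleGraph V) (α : V ≃ Fin n) (z : V) :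
    ∃ w, (w = z ∨ G.Adj w z) ∧ (α w : ℕ) = nbhdMin G α z := by
  have h : nbhdMin G α z ∈ {m : ℕ | ∃ w, (w = z ∨ G.Adj w z) ∧ (α w : ℕ) = m} :=
    Nat.sInf_mem ⟨(α z : ℕ), z, Or.inl rfl, rfl⟩
  exact h

lemma sum_earlier [Fintype V] [DecidableEq V] {n : ℕ} (H : SimpleGraph V)
    [DecidableRel H.Adj] (α : V ≃ Fin n) :
    ∑ z : V, (Finset.univ.filter fun w => H.Adj w z ∧ α w < α z).card
      = H.edgeFinset.card := by
  rw [← Finset.card_sigma]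
  refine Finset.card_bij (fun p _ => s(p.2, p.1)) ?_ ?_ ?_
  · rintro ⟨z, w⟩ hp
    simp only [Finset.mem_sigma, Finset.mem_univ, Finset.mem_filter, true_and] at hp
    simpa [SimpleGraph.mem_edgeFinset] using hp.1
  · rintro ⟨z, w⟩ hp ⟨z', w'⟩ hp' h
    simp only [Finset.mem_sigma, Finset.mem_univ, Finset.mem_filter, true_and] at hp hp'
    rw [Sym2.eq_iff] at h
    rcases h with ⟨h1, h2⟩ | ⟨h1, h2⟩
    · subst h1; subst h2; rfl
    · subst h1; subst h2; exact absurd hp'.2 (lt_asymm hp.2)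
  · intro e he
    rw [SimpleGraph.mem_edgeFinset] at he
    induction e with
    | h x y =>
      rw [SimpleGraph.mem_edgeSet] at he
      have hne : α x ≠ α y := fun h => he.ne (α.injective h)
      rcases hne.lt_or_gt with h | h
      · exact ⟨⟨y, x⟩, Finset.mem_sigma.mpr ⟨Finset.mem_univ _,
          Finset.mem_filter.mpr ⟨Finset.mem_univ _, he, h⟩⟩, rfl⟩
      · exact ⟨⟨x, y⟩, Finset.mem_sigma.mpr ⟨Finset.mem_univ _,
          Finset.mem_filter.mpr ⟨Finset.mem_univ _, he.symm, h⟩⟩, Sym2.eq_swap⟩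

lemma profile_le_ncard [Fintype V] (G H : SimpleGraph V) (hGH : G ≤ H)
    (hInt : IsIntervalGraph H) : profile G ≤ H.edgeSet.ncard := by
  classical
  obtain ⟨a, b, hab, hiff⟩ := hInt
  set n := Fintype.card V with hn
  set e : V ≃ Fin n := Fintype.equivFin V with he
  set f : Fin n → ℝ := b ∘ e.symm with hf
  set σ : Equiv.Perm (Fin n) := Tuple.sort f with hσ
  set α : V ≃ Fin n := e.trans σ.symm with hα
  have hsort : ∀ {x y : V}, α x ≤ α y → b x ≤ b y := by
    intro x y h
    have := Tuple.monotone_sort f h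
    simpa [hf, hα, hσ, Function.comp] using this
  have key : ∀ z : V, vtxProfile G α z ≤
      (Finset.univ.filter fun w => H.Adj w z ∧ α w < α z).card := by
    intro z
    obtain ⟨m, hm, hmval⟩ := nbhdMin_mem H α z
    have hGle : nbhdMin H α z ≤ nbhdMin G α z := by
      obtain ⟨w, hw, hwval⟩ := nbhdMin_mem G α z
      calc nbhdMin H α z ≤ (α w : ℕ) := nbhdMin_le H α (hw.imp id (fun h => hGH h))
        _ = nbhdMin G α z := hwval
    have hsub : Finset.Ico (nbhdMin H α z) ((α z : ℕ)) ⊆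
        Finset.image (fun w => (α w : ℕ))
          (Finset.univ.filter fun w => H.Adj w z ∧ α w < α z) := by
      intro k hk
      rw [Finset.mem_Ico] at hk
      have hkn : k < n := hk.2.trans (α z).isLt
      set w : V := α.symm ⟨k, hkn⟩ with hw
      have hαw : (α w : ℕ) = k := by simp [hw]
      have hwz : α w < α z := by rw [Fin.lt_def, hαw]; exact hk.2
      have hmw : α m ≤ α w := by rw [Fin.le_def, hαw, hmval]; exact hk.1
      have hne : w ≠ z := fun h => absurd hwz (by simp [h])
      have hmz : H.Adj m z := by
        rcases hm with rfl | h
        · exact absurd (hmw.trans_lt hwz) (lt_irrefl _)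
        · exact h
      have h1 := (hiff m z hmz.ne).mp hmz
      rw [Set.Icc_inter_Icc, Set.nonempty_Icc] at h1
      have hbm : b m ≤ b w := hsort hmw
      have hbw : b w ≤ b z := hsort hwz.le
      have hazw : a z ≤ b w :=
        ((le_max_right (a m) (a z)).trans (h1.trans (min_le_left _ _))).trans hbm
      have hadj : H.Adj w z := by
        rw [hiff w z hne, Set.Icc_inter_Icc, Set.nonempty_Icc]
        exact max_le (le_min (hab w) ((hab w).trans hbw)) (le_min hazw (hazw.trans hbw))
      rw [Finset.mem_image]
      exact ⟨w, Finset.mem_filter.mpr ⟨Finset.mem_univ _, hadj, hwz⟩, hαw⟩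
    calc vtxProfile G α z = (α z : ℕ) - nbhdMin G α z := rfl
      _ ≤ (α z : ℕ) - nbhdMin H α z := Nat.sub_le_sub_left hGle _
      _ = (Finset.Ico (nbhdMin H α z) ((α z : ℕ))).card := (Nat.card_Ico _ _).symm
      _ ≤ _ := Finset.card_le_card hsub
      _ ≤ _ := Finset.card_image_le
  have hord : ordProfile G α ≤ H.edgeFinset.card := by
    rw [← sum_earlier H α]
    exact Finset.sum_le_sum fun z _ => key z
  have hcard : H.edgeSet.ncard = H.edgeFinset.card := by
    rw [Set.ncard_eq_toFinset_card']
    congr 1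
  rw [hcard]
  exact le_trans (Nat.sInf_le ⟨α, rfl⟩) hord

lemma exists_interval_supergraph [Fintype V] (G : SimpleGraph V) {n : ℕ} (α : V ≃ Fin n) :
    ∃ H : SimpleGraph V, G ≤ H ∧ IsIntervalGraph H ∧ H.edgeSet.ncard ≤ ordProfile G α := by
  classical
  set a : V → ℝ := fun v => (nbhdMin G α v : ℝ) with ha
  set b : V → ℝ := fun v => ((α v : ℕ) : ℝ) with hb
  have hab : ∀ v, a v ≤ b v := fun v => by
    simp only [ha, hb]
    exact_mod_cast nbhdMin_le G α (Or.inl rfl)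
  set H : SimpleGraph V :=
    { Adj := fun x y => x ≠ y ∧ (Set.Icc (a x) (b x) ∩ Set.Icc (a y) (b y)).Nonempty
      symm := ⟨fun x y h => ⟨h.1.symm, by rw [Set.inter_comm]; exact h.2⟩⟩
      loopless := ⟨fun x h => h.1 rfl⟩ } with hH
  have hAdj : ∀ x y : V, H.Adj x y ↔ x ≠ y ∧ max (a x) (a y) ≤ min (b x) (b y) := by
    intro x y
    change (x ≠ y ∧ _) ↔ _
    rw [Set.Icc_inter_Icc, Set.nonempty_Icc]
  have hInt : IsIntervalGraph H :=
    ⟨a, b, hab, fun x y hxy => by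
      rw [hAdj, Set.Icc_inter_Icc, Set.nonempty_Icc]; simp [hxy]⟩
  have hGH : G ≤ H := by
    intro x y hxy
    rw [hAdj x y, max_le_iff, le_min_iff, le_min_iff]
    refine ⟨hxy.ne, ⟨hab x, ?_⟩, ?_, hab y⟩
    · simp only [ha, hb]
      exact_mod_cast nbhdMin_le G α (Or.inr hxy.symm)
    · simp only [ha, hb]
      exact_mod_cast nbhdMin_le G α (Or.inr hxy)
  refine ⟨H, hGH, hInt, ?_⟩
  have hle : ∀ z : V,
      (Finset.univ.filter fun w => H.Adj w z ∧ α w < α z).card ≤ vtxProfile G α z := by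
    intro z
    have := Finset.card_le_card_of_injOn (fun w => (α w : ℕ))
      (s := Finset.univ.filter fun w => H.Adj w z ∧ α w < α z)
      (t := Finset.Ico (nbhdMin G α z) ((α z : ℕ))) ?_ ?_
    · calc (Finset.univ.filter fun w => H.Adj w z ∧ α w < α z).card
          ≤ (Finset.Ico (nbhdMin G α z) ((α z : ℕ))).card := this
        _ = vtxProfile G α z := Nat.card_Ico _ _
    · intro w hw
      rw [Finset.mem_coe, Finset.mem_filter] at hw
      obtain ⟨-, hadj, hlt⟩ := hw
      rw [hAdj, max_le_iff, le_min_iff, le_min_iff] at hadj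
      have h1 : a z ≤ b w := hadj.2.2.1
      rw [Finset.mem_coe, Finset.mem_Ico]
      refine ⟨?_, hlt⟩
      simp only [ha, hb] at h1
      exact_mod_cast h1
    · intro u _ v _ h
      exact α.injective (Fin.val_injective h)
  have hcard : H.edgeSet.ncard = H.edgeFinset.card := by
    rw [Set.ncard_eq_toFinset_card']
    congr 1
  rw [hcard, ← sum_earlier H α]
  exact Finset.sum_le_sum fun z _ => hle z

/-- The profile of a graph equals the minimum number of edges of an interval supergraph. -/
theorem profile_eq_min_interval_supergraph_edges [Fintype V] (G : SimpleGraph V) :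
    profile G =
      sInf {m : ℕ | ∃ H : SimpleGraph V, G ≤ H ∧ IsIntervalGraph H ∧ H.edgeSet.ncard = m} := by
  classical
  have hAne : {p : ℕ | ∃ α : V ≃ Fin (Fintype.card V), ordProfile G α = p}.Nonempty :=
    ⟨_, Fintype.equivFin V, rfl⟩
  obtain ⟨H0, hGH0, hInt0, _⟩ := exists_interval_supergraph G (Fintype.equivFin V)
  have hBne : {m : ℕ | ∃ H : SimpleGraph V,
      G ≤ H ∧ IsIntervalGraph H ∧ H.edgeSet.ncard = m}.Nonempty :=
    ⟨_, H0, hGH0, hInt0, rfl⟩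
  apply le_antisymm
  · refine le_csInf hBne ?_
    rintro m ⟨H, hGH, hInt, rfl⟩
    exact profile_le_ncard G H hGH hInt
  · obtain ⟨αopt, hαopt⟩ := Nat.sInf_mem hAne
    obtain ⟨H, hGH, hInt, hc⟩ := exists_interval_supergraph G αopt
    calc sInf {m : ℕ | ∃ H : SimpleGraph V,
          G ≤ H ∧ IsIntervalGraph H ∧ H.edgeSet.ncard = m}
        ≤ H.edgeSet.ncard := Nat.sInf_le ⟨H, hGH, hInt, rfl⟩
      _ ≤ ordProfile G αopt := hc
      _ = profile G := hαopt
end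

section
/- If G is a 2-edge-connected finite simple graph of order n, then prf(G) ≥ (3n−3)/2 (equivalently, 2·prf(G) ≥ 3n−3). -/
variable {V : Type*}

open scoped Classical

section Aux

variable {n : ℕ}

lemma nbhdMin_le_self (G : SimpleGraph V) (α : V ≃ Fin n) (z : V) :
    nbhdMin G α z ≤ (α z : ℕ) :=
  Nat.sInf_le ⟨z, Or.inl rfl, rfl⟩

lemma nbhdMin_le_adj (G : SimpleGraph V) (α : V ≃ Fin n) {w z : V} (h : G.Adj w z) :
    nbhdMin G α z ≤ (α w : ℕ) :=
  Nat.sInf_le ⟨w, Or.inr h, rfl⟩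

/-- The set of vertices whose profile interval crosses the gap between positions `i` and `i+1`. -/
noncomputable def crossSet (G : SimpleGraph V) [Fintype V] (α : V ≃ Fin n) (i : ℕ) : Finset V :=
  Finset.univ.filter (fun z => nbhdMin G α z ≤ i ∧ i < (α z : ℕ))

lemma mem_crossSet {G : SimpleGraph V} [Fintype V] {α : V ≃ Fin n} {i : ℕ} {z : V} :
    z ∈ crossSet G α i ↔ nbhdMin G α z ≤ i ∧ i < (α z : ℕ) := by
  simp [crossSet]

lemma mem_crossSet_of_adj {G : SimpleGraph V} [Fintype V] {α : V ≃ Fin n} {i : ℕ} {a b : V}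
    (hab : G.Adj a b) (ha : (α a : ℕ) ≤ i) (hb : i < (α b : ℕ)) : b ∈ crossSet G α i :=
  mem_crossSet.mpr ⟨le_trans (nbhdMin_le_adj G α hab) ha, hb⟩

lemma exists_adj_of_connected (H : SimpleGraph V) (hH : H.Connected) {w y : V} (hy : y ≠ w) :
    ∃ x, H.Adj w x := by
  obtain ⟨p⟩ := hH.preconnected w y
  cases p with
  | nil => exact absurd rfl hy
  | cons h _ => exact ⟨_, h⟩

lemma two_adj (G : SimpleGraph V) [Fintype V] (hconn : G.Connected) (hcard : 3 ≤ Fintype.card V)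
    (h2ec : ∀ e ∈ G.edgeSet, (G.deleteEdges {e}).Connected) (w : V) :
    ∃ x y, x ≠ y ∧ G.Adj w x ∧ G.Adj w y := by
  have hnt : Nontrivial V := Fintype.one_lt_card_iff_nontrivial.mp (by omega)
  obtain ⟨y, hy⟩ := exists_ne w
  obtain ⟨x, hx⟩ := exists_adj_of_connected G hconn hy
  have he : s(w, x) ∈ G.edgeSet := hx
  have hH := h2ec _ he
  obtain ⟨x', hx'⟩ := exists_adj_of_connected _ hH hy
  rw [SimpleGraph.deleteEdges_adj] at hx'
  refine ⟨x, x', ?_, hx, hx'.1⟩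
  rintro rfl
  exact hx'.2 (Set.mem_singleton _)

lemma exists_cross (H : SimpleGraph V) (hH : H.Connected) (α : V ≃ Fin n) {i : ℕ}
    (hi : i < n - 1) : ∃ a b, H.Adj a b ∧ (α a : ℕ) ≤ i ∧ i < (α b : ℕ) := by
  have hn : 2 ≤ n := by omega
  obtain ⟨p⟩ := hH.preconnected (α.symm ⟨0, by omega⟩) (α.symm ⟨n - 1, by omega⟩)
  obtain ⟨d, _, hd1, hd2⟩ := p.exists_boundary_dart {u | (α u : ℕ) ≤ i}
    (by simp) (by simp; omega)
  exact ⟨d.fst, d.snd, d.adj, hd1, not_le.mp hd2⟩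

end Aux

/-- Theorem 2.5: a 2-edge-connected graph of order `n` has profile at least `(3n-3)/2`,
i.e. `2 · prf(G) ≥ 3n - 3`. -/
theorem profile_two_edge_connected [Fintype V] (G : SimpleGraph V)
    (hconn : G.Connected) (hcard : 3 ≤ Fintype.card V)
    (h2ec : ∀ e ∈ G.edgeSet, (G.deleteEdges {e}).Connected) :
    3 * Fintype.card V - 3 ≤ 2 * profile G := by
  set n := Fintype.card V with hn
  have key : ∀ α : V ≃ Fin n, 3 * n - 3 ≤ 2 * ordProfile G α := by
    intro α
    set f : ℕ → ℕ := fun i => (crossSet G α i).card with hf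
    -- Step 1: rewrite the profile as a sum of crossing numbers
    have hstep1 : ordProfile G α = ∑ i ∈ Finset.range (n - 1), f i := by
      have hz : ∀ z : V, vtxProfile G α z =
          ((Finset.range (n - 1)).filter (fun i => nbhdMin G α z ≤ i ∧ i < (α z : ℕ))).card := by
        intro z
        have h1 : (Finset.range (n - 1)).filter (fun i => nbhdMin G α z ≤ i ∧ i < (α z : ℕ))
            = Finset.Ico (nbhdMin G α z) ((α z : ℕ)) := by
          ext j
          have hlt := (α z).isLt
          simp only [Finset.mem_filter, Finset.mem_range, Finset.mem_Ico]
          omega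
        rw [vtxProfile, h1, Nat.card_Ico]
      calc ordProfile G α
          = ∑ z : V, ((Finset.range (n - 1)).filter
              (fun i => nbhdMin G α z ≤ i ∧ i < (α z : ℕ))).card := by
            rw [ordProfile]; exact Finset.sum_congr rfl fun z _ => hz z
        _ = ∑ z : V, ∑ i ∈ Finset.range (n - 1),
              (if nbhdMin G α z ≤ i ∧ i < (α z : ℕ) then 1 else 0) := by
            refine Finset.sum_congr rfl fun z _ => ?_
            rw [Finset.card_filter]
        _ = ∑ i ∈ Finset.range (n - 1), ∑ z : V,
              (if nbhdMin G α z ≤ i ∧ i < (α z : ℕ) then 1 else 0) := Finset.sum_comm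
        _ = ∑ i ∈ Finset.range (n - 1), f i := by
            refine Finset.sum_congr rfl fun i _ => ?_
            simp only [hf]
            exact (Finset.card_filter _ _).symm
    -- Step 2: every gap is crossed
    have h1 : ∀ i, i < n - 1 → 1 ≤ f i := by
      intro i hi
      obtain ⟨a, b, hab, ha, hb⟩ := exists_cross G hconn α hi
      exact Finset.card_pos.mpr ⟨b, mem_crossSet_of_adj hab ha hb⟩
    -- Step 3: the first gap is crossed at least twice
    have h0 : 2 ≤ f 0 := by
      have hx0 : ∀ x : V, G.Adj (α.symm ⟨0, by omega⟩) x → x ∈ crossSet G α 0 := by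
        intro x hx
        refine mem_crossSet_of_adj hx (by simp) ?_
        have : (α x : ℕ) ≠ 0 := by
          intro h
          have : α x = α (α.symm ⟨0, by omega⟩) := by
            simp only [Equiv.apply_symm_apply]
            exact Fin.ext h
          exact hx.ne' (α.injective this)
        omega
      obtain ⟨x, y, hxy, hx, hy⟩ := two_adj G hconn hcard h2ec (α.symm ⟨0, by omega⟩)
      exact Finset.one_lt_card.mpr ⟨x, hx0 x hx, y, hx0 y hy, hxy⟩
    -- Step 4: no two consecutive gaps are both crossed exactly once
    have hp : ∀ i, i + 1 < n - 1 → 3 ≤ f i + f (i + 1) := by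
      intro i hi
      by_contra hlt
      push_neg at hlt
      have hi' : i < n - 1 := by omega
      have hci : f i = 1 := by have := h1 i hi'; have := h1 (i+1) hi; omega
      have hci1 : f (i + 1) = 1 := by have := h1 i hi'; have := h1 (i+1) hi; omega
      obtain ⟨v, hv⟩ := Finset.card_eq_one.mp hci
      obtain ⟨u, hu⟩ := Finset.card_eq_one.mp hci1
      have uniq0 : ∀ z ∈ crossSet G α i, z = v := by
        intro z hz; rw [hv, Finset.mem_singleton] at hz; exact hz
      have uniq1 : ∀ z ∈ crossSet G α (i + 1), z = u := by
        intro z hz; rw [hu, Finset.mem_singleton] at hz; exact hz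
      have hvC : v ∈ crossSet G α i := hv ▸ Finset.mem_singleton_self v
      rw [mem_crossSet] at hvC
      by_cases hcase : (α v : ℕ) = i + 1
      · -- the unique gap-(i+1) crossing edge would be a bridge
        obtain ⟨a, b, hab, ha, hb⟩ := exists_cross G hconn α hi
        have hbu : b = u := uniq1 b (mem_crossSet_of_adj hab ha hb)
        have hai : ¬ ((α a : ℕ) ≤ i) := by
          intro h
          have hbv : b = v := uniq0 b (mem_crossSet_of_adj hab h (by omega))
          rw [hbv] at hb; omega
        have hav : a = v := by
          apply α.injective
          exact Fin.ext (by omega : (α a : ℕ) = (α v : ℕ))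
        rw [hav, hbu] at hab
        have hH := h2ec s(v, u) hab
        obtain ⟨a', b', hab', ha', hb'⟩ := exists_cross _ hH α hi
        rw [SimpleGraph.deleteEdges_adj] at hab'
        have hb'u : b' = u := uniq1 b' (mem_crossSet_of_adj hab'.1 ha' hb')
        have ha'i : ¬ ((α a' : ℕ) ≤ i) := by
          intro h
          have hbv : b' = v := uniq0 b' (mem_crossSet_of_adj hab'.1 h (by omega))
          rw [hbv] at hb'; omega
        have ha'v : a' = v := by
          apply α.injective
          exact Fin.ext (by omega : (α a' : ℕ) = (α v : ℕ))
        exact hab'.2 (by rw [ha'v, hb'u]; exact Set.mem_singleton _)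
      · -- the vertex at position i+1 would have degree ≤ 1
        have hvgt : i + 1 < (α v : ℕ) := by omega
        have hvC1 : v ∈ crossSet G α (i + 1) := mem_crossSet.mpr ⟨by omega, hvgt⟩
        have huv : u = v := (uniq1 v hvC1).symm
        set w : V := α.symm ⟨i + 1, by omega⟩ with hw
        have hαw : (α w : ℕ) = i + 1 := by simp [hw]
        have hadj_v : ∀ x : V, G.Adj w x → x = v := by
          intro x hx
          rcases lt_trichotomy ((α x : ℕ)) (i + 1) with hlt' | heq | hgt
          · exfalso
            have hwv : w = v :=
              uniq0 w (mem_crossSet_of_adj hx.symm (by omega) (by omega))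
            rw [hwv] at hαw; omega
          · exfalso
            have : x = w := by
              apply α.injective
              exact Fin.ext (by omega : (α x : ℕ) = (α w : ℕ))
            exact hx.ne' this
          · have : x ∈ crossSet G α (i + 1) :=
              mem_crossSet_of_adj hx (by omega) hgt
            rw [uniq1 x this, huv]
        obtain ⟨x, y, hxy, hx, hy⟩ := two_adj G hconn hcard h2ec w
        exact hxy ((hadj_v x hx).trans (hadj_v y hy).symm)
    -- Final arithmetic
    obtain ⟨k, hk⟩ : ∃ k, n - 1 = k + 2 := ⟨n - 3, by omega⟩
    rw [hstep1, hk]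
    have A : ∑ i ∈ Finset.range (k + 2), f i
        = (∑ i ∈ Finset.range (k + 1), f i) + f (k + 1) := Finset.sum_range_succ f (k + 1)
    have B : ∑ i ∈ Finset.range (k + 2), f i
        = (∑ i ∈ Finset.range (k + 1), f (i + 1)) + f 0 := Finset.sum_range_succ' f (k + 1)
    have hpair : 3 * (k + 1) ≤ ∑ i ∈ Finset.range (k + 1), (f i + f (i + 1)) := by
      calc 3 * (k + 1) = ∑ _i ∈ Finset.range (k + 1), 3 := by
            rw [Finset.sum_const, Finset.card_range, smul_eq_mul]; ring
        _ ≤ ∑ i ∈ Finset.range (k + 1), (f i + f (i + 1)) := by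
            refine Finset.sum_le_sum fun i hi => ?_
            rw [Finset.mem_range] at hi
            exact hp i (by omega)
    have hsplit : ∑ i ∈ Finset.range (k + 1), (f i + f (i + 1))
        = (∑ i ∈ Finset.range (k + 1), f i) + ∑ i ∈ Finset.range (k + 1), f (i + 1) :=
      Finset.sum_add_distrib
    have hlast : 1 ≤ f (k + 1) := h1 (k + 1) (by omega)
    omega
  have hne : {p : ℕ | ∃ α : V ≃ Fin (Fintype.card V), ordProfile G α = p}.Nonempty :=
    ⟨_, Fintype.equivFin V, rfl⟩
  rw [profile]
  obtain ⟨α, hα⟩ := Nat.sInf_mem hne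
  rw [← hα]
  exact key α
end

section
/- Let G be a chain of order n with bridgeless components C_1,…,C_t, let η be the total number of vertices contained in the nontrivial bridgeless components of G, and let k be a positive integer. If α is a special ordering of G with prf_α(G) ≤ n−1+k, then η ≤ 3k. -/
variable {V : Type*}

set_option linter.unusedSectionVars false
set_option linter.unusedVariables false
set_option maxHeartbeats 1000000

section ChainAux
open Finset

open Finset

section Aux
variable {W : Type*}

private lemma walk_cross (H : SimpleGraph W) (s : Set W) :
    ∀ {a b : W} (_w : H.Walk a b), a ∈ s → b ∉ s →
    ∃ u v, u ∈ s ∧ v ∉ s ∧ H.Adj u v := by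
  intro a b w
  induction w with
  | nil => intro ha hb; exact absurd ha hb
  | @cons a c b h p ih =>
    intro ha hb
    by_cases hc : c ∈ s
    · exact ih hc hb
    · exact ⟨a, c, ha, hc, h⟩

private lemma cross_exists (H : SimpleGraph W) (hH : H.Preconnected) {s : Set W}
    {a b : W} (ha : a ∈ s) (hb : b ∉ s) :
    ∃ u v, u ∈ s ∧ v ∉ s ∧ H.Adj u v := by
  obtain ⟨w⟩ := hH a b
  exact walk_cross H s w ha hb

private lemma cross_two (H : SimpleGraph W) (hH : H.Preconnected)
    (hbr : ∀ e, ¬ H.IsBridge e) {s : Set W} {a b : W} (ha : a ∈ s) (hb : b ∉ s) :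
    ∃ u₁ v₁ u₂ v₂, u₁ ∈ s ∧ v₁ ∉ s ∧ H.Adj u₁ v₁ ∧ u₂ ∈ s ∧ v₂ ∉ s ∧ H.Adj u₂ v₂ ∧
      s(u₁, v₁) ≠ s(u₂, v₂) := by
  obtain ⟨u, v, hu, hv, huv⟩ := cross_exists H hH ha hb
  have hnb := hbr s(u, v)
  rw [SimpleGraph.isBridge_iff] at hnb
  push_neg at hnb
  obtain ⟨w⟩ := hnb
  obtain ⟨u₂, v₂, h1, h2, h3⟩ := walk_cross _ s w hu hv
  rw [SimpleGraph.deleteEdges_adj] at h3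
  refine ⟨u₂, v₂, u, v, h1, h2, h3.1, hu, hv, huv, ?_⟩
  intro he
  exact h3.2 (by rw [he]; exact Set.mem_singleton _)

private lemma two_nbrs (H : SimpleGraph W) (hH : H.Preconnected)
    (hbr : ∀ e, ¬ H.IsBridge e) (y b : W) (hb : b ≠ y) :
    ∃ w₁ w₂, H.Adj y w₁ ∧ H.Adj y w₂ ∧ w₁ ≠ w₂ := by
  obtain ⟨u₁, v₁, u₂, v₂, hu₁, hv₁, h₁, hu₂, hv₂, h₂, hne⟩ :=
    cross_two H hH hbr (s := {x | x ≠ y}) (a := b) (b := y) hb (by simp)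
  simp only [Set.mem_setOf_eq, not_not] at hv₁ hv₂
  subst hv₁; subst hv₂
  refine ⟨u₁, u₂, h₁.symm, h₂.symm, ?_⟩
  intro h; exact hne (by rw [h])

end Aux
open Finset
open scoped Classical

section Aux2
variable {W : Type*} [Fintype W]

noncomputable def bdry (H : SimpleGraph W) (S : Finset W) : Finset W :=
  univ.filter (fun z => z ∉ S ∧ ∃ w ∈ S, H.Adj w z)

lemma mem_bdry {H : SimpleGraph W} {S : Finset W} {z : W} :
    z ∈ bdry H S ↔ z ∉ S ∧ ∃ w ∈ S, H.Adj w z := by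
  simp [bdry]

private lemma pair_le {s : Finset W} {w₁ w₂ : W} (hne : w₁ ≠ w₂)
    (h₁ : w₁ ∈ s) (h₂ : w₂ ∈ s) : 2 ≤ s.card := by
  calc 2 = ({w₁, w₂} : Finset W).card := (card_pair hne).symm
    _ ≤ _ := by
      apply card_le_card
      intro z hz
      rcases mem_insert.1 hz with h | h
      · exact h ▸ h₁
      · exact (mem_singleton.1 h) ▸ h₂

private lemma g0 (H : SimpleGraph W) (hH : H.Preconnected)
    (hbr : ∀ e, ¬ H.IsBridge e) (v0 x : W) (hx : x ≠ v0) :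
    2 ≤ (bdry H {v0}).card := by
  obtain ⟨w₁, w₂, h₁, h₂, hne⟩ := two_nbrs H hH hbr v0 x hx
  have hw : ∀ w, H.Adj v0 w → w ∈ bdry H {v0} := by
    intro w hw
    exact mem_bdry.2 ⟨by simp [hw.ne'], v0, by simp, hw⟩
  exact pair_le hne (hw _ h₁) (hw _ h₂)

private lemma nc (H : SimpleGraph W) (hH : H.Preconnected)
    (hbr : ∀ e, ¬ H.IsBridge e) (S : Finset W) (y : W) (hyS : y ∉ S)
    (hSne : S.Nonempty) (x : W) (hxS : x ∉ S) (hxy : x ≠ y)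
    (hbad : (bdry H S).card ≤ 1) :
    2 ≤ (bdry H (insert y S)).card := by
  obtain ⟨a, ha⟩ := hSne
  obtain ⟨u, v, hu, hv, huv⟩ :=
    cross_exists H hH (s := {w | w ∈ S}) ha (show y ∉ _ from hyS)
  have hvb : v ∈ bdry H S := mem_bdry.2 ⟨hv, u, hu, huv⟩
  have hcard : (bdry H S).card = 1 := le_antisymm hbad (card_pos.2 ⟨v, hvb⟩)
  obtain ⟨z, hz⟩ := card_eq_one.1 hcard
  have hbd : ∀ w, w ∈ bdry H S ↔ w = z := by intro w; rw [hz, mem_singleton]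
  by_cases hyz : y = z
  · -- case A : two crossing edges of insert y S, all from y = z
    have hx' : x ∉ ({w | w ∈ insert y S} : Set W) := by
      simp only [Set.mem_setOf_eq, mem_insert]
      rintro (h | h)
      · exact hxy h
      · exact hxS h
    obtain ⟨u₁, v₁, u₂, v₂, hu₁, hv₁, h₁, hu₂, hv₂, h₂, hne⟩ :=
      cross_two H hH hbr (s := {w | w ∈ insert y S}) (a := y) (b := x)
        (by simp) hx'
    simp only [Set.mem_setOf_eq, mem_insert] at hu₁ hu₂ hv₁ hv₂
    push_neg at hv₁ hv₂
    have hq : ∀ u' v', (u' = y ∨ u' ∈ S) → v' ≠ y → v' ∉ S → H.Adj u' v' → u' = y := by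
      intro u' v' hu' hv'1 hv'2 hadj
      rcases hu' with h | h
      · exact h
      · have : v' = z := (hbd v').1 (mem_bdry.2 ⟨hv'2, u', h, hadj⟩)
        exact absurd (this.trans hyz.symm) hv'1
    have e₁ : u₁ = y := hq _ _ hu₁ hv₁.1 hv₁.2 h₁
    have e₂ : u₂ = y := hq _ _ hu₂ hv₂.1 hv₂.2 h₂
    rw [e₁] at h₁ hne
    rw [e₂] at h₂ hne
    have hvne : v₁ ≠ v₂ := fun h => hne (by rw [h])
    have hmem : ∀ v', v' ≠ y → v' ∉ S → H.Adj y v' → v' ∈ bdry H (insert y S) := by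
      intro v' hv1 hv2 h3
      exact mem_bdry.2 ⟨by simp [hv1, hv2], y, mem_insert_self _ _, h3⟩
    exact pair_le hvne (hmem _ hv₁.1 hv₁.2 h₁) (hmem _ hv₂.1 hv₂.2 h₂)
  · -- case B : y ≠ z; y has two neighbours, all outside S
    obtain ⟨w₁, w₂, hw₁, hw₂, hwne⟩ := two_nbrs H hH hbr y a (fun h => hyS (h ▸ ha))
    have hwS : ∀ w, H.Adj y w → w ∉ S := by
      intro w hw hwS
      exact hyz ((hbd y).1 (mem_bdry.2 ⟨hyS, w, hwS, hw.symm⟩))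
    have hmem : ∀ w, H.Adj y w → w ∈ bdry H (insert y S) := by
      intro w hw
      exact mem_bdry.2 ⟨by simp [hw.ne', hwS w hw], y, mem_insert_self _ _, hw⟩
    exact pair_le hwne (hmem _ hw₁) (hmem _ hw₂)

end Aux2
open Finset
open scoped Classical

private lemma comp {W : Type*} [Fintype W] (H : SimpleGraph W) (hconn : H.Preconnected)
    (hbr : ∀ e, ¬ H.IsBridge e) (β : W → ℕ) (hβ : Function.Injective β)
    (hm : 2 ≤ Fintype.card W) :
    ∃ Q : Finset ℕ,
      (∀ p ∈ Q, (∃ w, β w = p) ∧ (∃ w, p < β w) ∧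
        2 ≤ (univ.filter (fun z => p < β z ∧ ∃ u, H.Adj u z ∧ β u ≤ p)).card) ∧
      Fintype.card W ≤ 3 * Q.card := by
  set m := Fintype.card W with hmdef
  have hP : (univ.image β).card = m := by
    rw [card_image_of_injective _ hβ, card_univ]
  set P := univ.image β with hPdef
  set e := P.orderIsoOfFin hP with hedef
  have hvert : ∀ j : Fin m, ∃ w, β w = ((e j : ℕ)) := by
    intro j
    obtain ⟨w, -, hw⟩ := mem_image.1 (e j).2
    exact ⟨w, hw⟩
  choose vert hvertβ using hvert
  -- SAt p : vertices in positions ≤ p ; bAt p : its boundary as a condition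
  set SAt : ℕ → Finset W := fun p => univ.filter (fun z => β z ≤ p) with hSdef
  have hmemS : ∀ (p : ℕ) (z : W), z ∈ SAt p ↔ β z ≤ p := by
    intro p z; simp [hSdef]
  have hbb : ∀ p : ℕ,
      univ.filter (fun z => p < β z ∧ ∃ u, H.Adj u z ∧ β u ≤ p) = bdry H (SAt p) := by
    intro p
    ext z
    simp only [mem_filter, mem_univ, true_and, mem_bdry]
    constructor
    · rintro ⟨h1, u, h2, h3⟩
      exact ⟨by rw [hmemS]; omega, u, (hmemS p u).2 h3, h2⟩
    · rintro ⟨h1, u, h2, h3⟩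
      rw [hmemS] at h1 h2
      exact ⟨by omega, u, h3, h2⟩
  -- membership in SAt of a stage position, via the order iso
  have hkey : ∀ (z : W) (j : Fin m), β z ≤ (e j : ℕ) ↔ e.symm ⟨β z, mem_image_of_mem β (mem_univ z)⟩ ≤ j := by
    intro z j
    constructor
    · intro h
      rw [← e.le_iff_le, e.apply_symm_apply]
      exact Subtype.coe_le_coe.1 h
    · intro h
      have h2 := e.le_iff_le.2 h
      rw [e.apply_symm_apply] at h2
      exact Subtype.coe_le_coe.2 h2
  -- vert j is in SAt (e j)
  have hvin : ∀ j : Fin m, vert j ∈ SAt ((e j : ℕ)) := by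
    intro j; rw [hmemS, hvertβ]
  -- monotonicity facts
  have hstrict : ∀ j j' : Fin m, j < j' → ((e j : ℕ)) < ((e j' : ℕ)) := by
    intro j j' h
    exact Subtype.coe_lt_coe.2 (e.lt_iff_lt.2 h)
  have hvnotin : ∀ j j' : Fin m, j < j' → vert j' ∉ SAt ((e j : ℕ)) := by
    intro j j' h hin
    rw [hmemS, hvertβ] at hin
    exact absurd hin (not_le.2 (hstrict _ _ h))
  -- stage 0 : singleton
  have h0m : 0 < m := by omega
  have hstage0 : SAt ((e ⟨0, h0m⟩ : ℕ)) = {vert ⟨0, h0m⟩} := by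
    ext z
    rw [hmemS, mem_singleton]
    constructor
    · intro h
      have h2 := (hkey z ⟨0, h0m⟩).1 h
      have h3 : e.symm ⟨β z, mem_image_of_mem β (mem_univ z)⟩ = ⟨0, h0m⟩ :=
        le_antisymm h2 (by exact Fin.mk_le_mk.2 (Nat.zero_le _))
      have h4 : β z = ((e ⟨0, h0m⟩ : ℕ)) := by
        have := congrArg e h3
        rw [e.apply_symm_apply] at this
        exact congrArg Subtype.val this
      exact hβ (h4.trans (hvertβ _).symm)
    · intro h; rw [h, hvertβ]
  -- successor stage : insert
  have hstageS : ∀ (j : ℕ) (hj : j < m) (hj1 : j + 1 < m),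
      SAt ((e ⟨j + 1, hj1⟩ : ℕ)) = insert (vert ⟨j + 1, hj1⟩) (SAt ((e ⟨j, hj⟩ : ℕ))) := by
    intro j hj hj1
    ext z
    rw [hmemS, mem_insert, hmemS]
    constructor
    · intro h
      have h2 := (hkey z ⟨j + 1, hj1⟩).1 h
      have h2' : ((e.symm ⟨β z, mem_image_of_mem β (mem_univ z)⟩ : Fin m) : ℕ) ≤ j + 1 := h2
      rcases Nat.lt_or_ge ((e.symm ⟨β z, mem_image_of_mem β (mem_univ z)⟩ : Fin m) : ℕ) (j + 1) with hlt | hge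
      · right
        refine (hkey z ⟨j, hj⟩).2 ?_
        show ((e.symm ⟨β z, mem_image_of_mem β (mem_univ z)⟩ : Fin m) : ℕ) ≤ j
        omega
      · left
        have h3 : e.symm ⟨β z, mem_image_of_mem β (mem_univ z)⟩ = ⟨j + 1, hj1⟩ := by
          apply Fin.ext
          show _ = j + 1
          omega
        have h4 : β z = ((e ⟨j + 1, hj1⟩ : ℕ)) := by
          have := congrArg e h3
          rw [e.apply_symm_apply] at this
          exact congrArg Subtype.val this
        exact hβ (h4.trans (hvertβ _).symm)
    · rintro (h | h)
      · rw [h, hvertβ]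
      · exact h.trans (le_of_lt (hstrict ⟨j, hj⟩ ⟨j + 1, hj1⟩ (Fin.mk_lt_mk.2 (Nat.lt_succ_self _))))
  -- goodness predicate on stage indices
  set pos : ℕ → ℕ := fun j => if h : j < m then ((e ⟨j, h⟩ : ℕ)) else 0 with hposdef
  have hpos : ∀ (j : ℕ) (h : j < m), pos j = ((e ⟨j, h⟩ : ℕ)) := by
    intro j h; simp [hposdef, dif_pos h]
  set good : ℕ → Prop := fun j => 2 ≤ (bdry H (SAt (pos j))).card with hgdef
  have hgood0 : good 0 := by
    show 2 ≤ _
    rw [hpos 0 h0m, hstage0]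
    obtain ⟨x, hx⟩ := Fintype.exists_ne_of_one_lt_card (by omega) (vert ⟨0, h0m⟩)
    exact g0 H hconn hbr _ x hx
  have hstep : ∀ j : ℕ, j + 1 < m - 1 → ¬ good j → good (j + 1) := by
    intro j hjm hbadj
    have hj : j < m := by omega
    have hj1 : j + 1 < m := by omega
    have hm1 : m - 1 < m := by omega
    have hbad' : (bdry H (SAt ((e ⟨j, hj⟩ : ℕ)))).card ≤ 1 := by
      rw [hgdef] at hbadj
      simp only [hpos j hj] at hbadj
      omega
    show 2 ≤ _
    rw [hpos (j + 1) hj1, hstageS j hj hj1]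
    refine nc H hconn hbr _ _ (hvnotin ⟨j, hj⟩ ⟨j + 1, hj1⟩ (Fin.mk_lt_mk.2 (by omega)))
      ⟨vert ⟨j, hj⟩, hvin _⟩ (vert ⟨m - 1, hm1⟩)
      (hvnotin ⟨j, hj⟩ ⟨m - 1, hm1⟩ (Fin.mk_lt_mk.2 (by omega))) ?_ hbad'
    intro hEq
    have hb := congrArg β hEq
    rw [hvertβ, hvertβ] at hb
    have := hstrict ⟨j + 1, hj1⟩ ⟨m - 1, hm1⟩ (Fin.mk_lt_mk.2 (by omega))
    omega
  -- counting good stages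
  set GoodN := (range (m - 1)).filter good with hGdef
  set BadN := (range (m - 1)).filter (fun j => ¬ good j) with hBdef
  have h0G : 0 ∈ GoodN := by
    rw [hGdef, mem_filter, mem_range]
    exact ⟨by omega, hgood0⟩
  have hinj : BadN.card ≤ GoodN.card := by
    apply card_le_card_of_injOn (fun j => j - 1)
    · intro j hjB
      rw [hBdef, mem_coe, mem_filter, mem_range] at hjB
      have hj0 : j ≠ 0 := fun h => hjB.2 (h ▸ hgood0)
      rw [hGdef, mem_coe, mem_filter, mem_range]
      have hlt : j - 1 < m - 1 := by omega
      refine ⟨hlt, ?_⟩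
      by_contra hbad
      have hjj : j - 1 + 1 = j := by omega
      have hs := hstep (j - 1) (by omega) hbad
      rw [hjj] at hs
      exact hjB.2 hs
    · intro j hjB j' hjB' hEq
      simp only [mem_coe, hBdef, mem_filter, mem_range] at hjB hjB'
      have hj0 : j ≠ 0 := fun h => hjB.2 (h ▸ hgood0)
      have hj0' : j' ≠ 0 := fun h => hjB'.2 (h ▸ hgood0)
      have hEq' : j - 1 = j' - 1 := hEq
      omega
  have hsum : GoodN.card + BadN.card = m - 1 := by
    rw [hGdef, hBdef]
    exact card_filter_add_card_filter_not (fun j => good j) |>.trans (card_range _)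
  have hq1 : 1 ≤ GoodN.card := card_pos.2 ⟨0, h0G⟩
  -- assemble Q
  refine ⟨GoodN.image pos, ?_, ?_⟩
  · intro p hp
    obtain ⟨j, hjG, hjp⟩ := mem_image.1 hp
    have hjr : j < m - 1 := by
      rw [hGdef, mem_filter, mem_range] at hjG; exact hjG.1
    have hgoodj : good j := by
      rw [hGdef, mem_filter] at hjG; exact hjG.2
    have hj : j < m := by omega
    rw [hpos j hj] at hjp
    have hm1 : m - 1 < m := by omega
    refine ⟨⟨vert ⟨j, hj⟩, by rw [hvertβ, hjp]⟩, ⟨vert ⟨m - 1, hm1⟩, ?_⟩, ?_⟩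
    · rw [hvertβ, ← hjp]
      exact hstrict ⟨j, hj⟩ ⟨m - 1, hm1⟩ (Fin.mk_lt_mk.2 (by omega))
    · rw [← hjp, hbb]
      rw [hgdef] at hgoodj
      simpa [hpos j hj] using hgoodj
  · have hcard : (GoodN.image pos).card = GoodN.card := by
      apply card_image_of_injOn
      intro j hjG j' hjG' hEq
      simp only [mem_coe, hGdef, mem_filter, mem_range] at hjG hjG'
      have hj : j < m := by omega
      have hj' : j' < m := by omega
      rw [hpos j hj, hpos j' hj'] at hEq
      have h2 := e.injective (Subtype.ext hEq)
      have h3 : j = j' := by injection h2 with h3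
      exact h3
    omega

private lemma chain_aux {V : Type*} [Fintype V] (G : SimpleGraph V)
    (hG : G.Connected) (t k : ℕ)
    (C : ℕ → Finset V)
    (hpart : ∀ v : V, ∃! i, i < t ∧ v ∈ C i)
    (hcomp : ∀ i, i < t → (G.induce {v : V | v ∈ C i}).Connected ∧
      ∀ e, ¬ (G.induce {v : V | v ∈ C i}).IsBridge e)
    {n : ℕ} (α : V ≃ Fin n)
    (hprf : ordProfile G α ≤ n - 1 + k) :
    ∑ i ∈ (Finset.range t).filter (fun i => 1 < (C i).card), (C i).card ≤ 3 * k := by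
  classical
  set NT := (Finset.range t).filter (fun i => 1 < (C i).card) with hNT
  set B : ℕ → ℕ :=
    fun p => (univ.filter (fun z : V => nbhdMin G α z ≤ p ∧ p < (α z : ℕ))).card with hB
  have hmin_le : ∀ (z : V) (p : ℕ),
      nbhdMin G α z ≤ p ↔ ∃ w, (w = z ∨ G.Adj w z) ∧ (α w : ℕ) ≤ p := by
    intro z p
    have hne : {m : ℕ | ∃ w, (w = z ∨ G.Adj w z) ∧ (α w : ℕ) = m}.Nonempty :=
      ⟨(α z : ℕ), z, Or.inl rfl, rfl⟩
    constructor
    · intro h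
      obtain ⟨w, hw, hwv⟩ := Nat.sInf_mem hne
      exact ⟨w, hw, hwv.le.trans h⟩
    · rintro ⟨w, hw, hwp⟩
      exact le_trans (Nat.sInf_le ⟨w, hw, rfl⟩) hwp
  have hminself : ∀ z : V, nbhdMin G α z ≤ (α z : ℕ) :=
    fun z => Nat.sInf_le ⟨z, Or.inl rfl, rfl⟩
  -- profile as a sum over positions
  have hprofsum : ordProfile G α = ∑ p ∈ range n, B p := by
    rw [ordProfile]
    have h1 : ∀ z : V, vtxProfile G α z
        = ((range n).filter (fun p => nbhdMin G α z ≤ p ∧ p < (α z : ℕ))).card := by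
      intro z
      rw [vtxProfile]
      have h2 : (range n).filter (fun p => nbhdMin G α z ≤ p ∧ p < (α z : ℕ))
          = Ico (nbhdMin G α z) ((α z : ℕ)) := by
        ext p
        simp only [mem_filter, mem_range, mem_Ico]
        have h3 := (α z).isLt
        omega
      rw [h2, Nat.card_Ico]
    calc ∑ z : V, vtxProfile G α z
        = ∑ z : V, ∑ p ∈ range n,
            (if nbhdMin G α z ≤ p ∧ p < (α z : ℕ) then 1 else 0) := by
          refine Finset.sum_congr rfl fun z _ => ?_
          rw [h1 z, card_filter]
      _ = ∑ p ∈ range n, ∑ z : V,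
            (if nbhdMin G α z ≤ p ∧ p < (α z : ℕ) then 1 else 0) := Finset.sum_comm
      _ = ∑ p ∈ range n, B p := by
          refine Finset.sum_congr rfl fun p _ => ?_
          simp only [hB]
          rw [card_filter]
  -- baseline : every cut position contributes at least 1
  have hbase : ∀ p : ℕ, p < n - 1 → 1 ≤ B p := by
    intro p hp
    have h0 : (0 : ℕ) < n := by omega
    have hn1 : n - 1 < n := by omega
    have ha : ((α (α.symm ⟨0, h0⟩) : Fin n) : ℕ) = 0 := by rw [α.apply_symm_apply]
    have hbv : ((α (α.symm ⟨n - 1, hn1⟩) : Fin n) : ℕ) = n - 1 := by rw [α.apply_symm_apply]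
    obtain ⟨u, v, hu, hv, huv⟩ := cross_exists G hG.preconnected
      (s := {w : V | (α w : ℕ) ≤ p}) (a := α.symm ⟨0, h0⟩) (b := α.symm ⟨n - 1, hn1⟩)
      (by simp only [Set.mem_setOf_eq]; omega)
      (by simp only [Set.mem_setOf_eq]; omega)
    rw [hB]
    refine card_pos.2 ⟨v, mem_filter.2 ⟨mem_univ _, ?_, ?_⟩⟩
    · exact (hmin_le v p).2 ⟨u, Or.inr huv, hu⟩
    · exact not_le.1 hv
  -- per-component good positions
  have hcompQ : ∀ i : ℕ, ∃ Q : Finset ℕ, i ∈ NT →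
      ((∀ p ∈ Q, (∃ v ∈ C i, (α v : ℕ) = p) ∧ p < n - 1 ∧ 2 ≤ B p) ∧
        (C i).card ≤ 3 * Q.card) := by
    intro i
    by_cases hi : i ∈ NT
    swap
    · exact ⟨∅, fun h => absurd h hi⟩
    rw [hNT, mem_filter, mem_range] at hi
    obtain ⟨hit, hi2⟩ := hi
    obtain ⟨hconn, hbr⟩ := hcomp i hit
    have hcardW : Fintype.card ↥{v : V | v ∈ C i} = (C i).card :=
      Fintype.card_of_subtype (C i) (fun x => Iff.rfl)
    have hβinj : Function.Injective (fun z : ↥{v : V | v ∈ C i} => ((α z.1 : Fin n) : ℕ)) := by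
      intro z z' h
      exact Subtype.ext (α.injective (Fin.val_injective h))
    obtain ⟨Q, hQ1, hQ2⟩ := comp (G.induce {v : V | v ∈ C i}) hconn.preconnected hbr
      (fun z => ((α z.1 : Fin n) : ℕ)) hβinj (by omega)
    refine ⟨Q, fun _ => ⟨?_, ?_⟩⟩
    · intro p hp
      obtain ⟨⟨w, hw⟩, ⟨w', hw'⟩, hcard⟩ := hQ1 p hp
      refine ⟨⟨w.1, w.2, hw⟩, ?_, ?_⟩
      · have := (α w'.1).isLt
        omega
      · rw [hB]
        calc 2 ≤ (univ.filter (fun z : ↥{v : V | v ∈ C i} =>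
              p < ((α z.1 : Fin n) : ℕ) ∧ ∃ u, (G.induce {v : V | v ∈ C i}).Adj u z ∧
                ((α u.1 : Fin n) : ℕ) ≤ p)).card := hcard
          _ ≤ _ := by
            apply card_le_card_of_injOn (fun z => z.1)
            · intro z hz
              rw [mem_coe, mem_filter] at hz
              obtain ⟨-, hz1, u, hadj, hu⟩ := hz
              rw [mem_coe, mem_filter]
              refine ⟨mem_univ _, ?_, hz1⟩
              refine (hmin_le z.1 p).2 ⟨u.1, Or.inr ?_, hu⟩
              exact hadj
            · intro z _ z' _ h
              exact Subtype.ext h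
    · calc (C i).card = Fintype.card ↥{v : V | v ∈ C i} := hcardW.symm
        _ ≤ 3 * Q.card := hQ2
  choose Qf hQf using hcompQ
  -- the Qf i are pairwise disjoint
  have hdisj : ∀ i ∈ NT, ∀ j ∈ NT, i ≠ j → Disjoint (Qf i) (Qf j) := by
    intro i hi j hj hij
    rw [Finset.disjoint_left]
    intro p hpi hpj
    obtain ⟨⟨vi, hvi, hvip⟩, -, -⟩ := (hQf i hi).1 p hpi
    obtain ⟨⟨vj, hvj, hvjp⟩, -, -⟩ := (hQf j hj).1 p hpj
    have hvv : vi = vj := α.injective (Fin.val_injective (hvip.trans hvjp.symm))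
    have hit : i < t := mem_range.1 (mem_filter.1 hi).1
    have hjt : j < t := mem_range.1 (mem_filter.1 hj).1
    obtain ⟨i0, -, huniq⟩ := hpart vi
    exact hij ((huniq i ⟨hit, hvi⟩).trans (huniq j ⟨hjt, hvv ▸ hvj⟩).symm)
  set GoodPos := (range (n - 1)).filter (fun p => 2 ≤ B p) with hGP
  have hsub : ∀ i ∈ NT, Qf i ⊆ GoodPos := by
    intro i hi p hp
    obtain ⟨-, h1, h2⟩ := (hQf i hi).1 p hp
    rw [hGP, mem_filter, mem_range]
    exact ⟨h1, h2⟩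
  have hGPcard : ∑ i ∈ NT, (Qf i).card ≤ GoodPos.card := by
    rw [← card_biUnion hdisj]
    exact card_le_card (biUnion_subset.2 hsub)
  -- global lower bound on the profile
  have hlow : n - 1 + GoodPos.card ≤ ∑ p ∈ range (n - 1), B p := by
    have he : n - 1 + GoodPos.card
        = ∑ p ∈ range (n - 1), (1 + if 2 ≤ B p then 1 else 0) := by
      rw [Finset.sum_add_distrib, Finset.sum_const, card_range, smul_eq_mul, mul_one]
      congr 1
      rw [hGP, card_filter]
    rw [he]
    refine Finset.sum_le_sum fun p hp => ?_
    have h1 := hbase p (mem_range.1 hp)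
    split_ifs with h2 <;> omega
  have hup : ∑ p ∈ range (n - 1), B p ≤ n - 1 + k := by
    calc ∑ p ∈ range (n - 1), B p ≤ ∑ p ∈ range n, B p :=
          Finset.sum_le_sum_of_subset (range_subset_range.2 (by omega))
      _ = ordProfile G α := hprofsum.symm
      _ ≤ n - 1 + k := hprf
  have hkg : GoodPos.card ≤ k := by omega
  calc ∑ i ∈ NT, (C i).card ≤ ∑ i ∈ NT, 3 * (Qf i).card :=
        Finset.sum_le_sum (fun i hi => (hQf i hi).2)
    _ = 3 * ∑ i ∈ NT, (Qf i).card := by rw [Finset.mul_sum]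
    _ ≤ 3 * GoodPos.card := Nat.mul_le_mul_left _ hGPcard
    _ ≤ 3 * k := Nat.mul_le_mul_left _ hkg

end ChainAux

/-- Lemma 2.7: in a chain with bridgeless components `C_0, …, C_{t-1}`, if a special
ordering `α` has profile at most `n - 1 + k`, then the total number of vertices in
nontrivial bridgeless components is at most `3k`. -/
theorem chain_nontrivial_vertices_le [Fintype V] (G : SimpleGraph V)
    (hG : G.Connected) (t k : ℕ) (ht : 1 ≤ t) (hk : 1 ≤ k)
    (C : ℕ → Finset V)
    -- the bridgeless components C_0, …, C_{t-1} partition V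
    (hpart : ∀ v : V, ∃! i, i < t ∧ v ∈ C i)
    -- each component induces a connected subgraph with no bridges
    (hcomp : ∀ i, i < t → (G.induce {v : V | v ∈ C i}).Connected ∧
      ∀ e, ¬ (G.induce {v : V | v ∈ C i}).IsBridge e)
    -- consecutive components are linked by a bridge, which is the unique edge between them
    (hlink : ∀ i, i + 1 < t → ∃ u v : V, u ∈ C i ∧ v ∈ C (i + 1) ∧ G.Adj u v ∧
      G.IsBridge s(u, v) ∧
      ∀ u' v' : V, u' ∈ C i → v' ∈ C (i + 1) → G.Adj u' v' → u' = u ∧ v' = v)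
    -- there are no edges between non-consecutive components
    (hfar : ∀ i j, i < t → j < t → i + 1 < j → ∀ u ∈ C i, ∀ v ∈ C j, ¬ G.Adj u v)
    -- α is a special ordering of the chain
    (α : V ≃ Fin (Fintype.card V))
    (hspecial : ∀ i j, i < t → j < t → i < j → ∀ u ∈ C i, ∀ v ∈ C j, α u < α v)
    (hprf : ordProfile G α ≤ Fintype.card V - 1 + k) :
    ∑ i ∈ (Finset.range t).filter (fun i => 1 < (C i).card), (C i).card ≤ 3 * k := by
  exact chain_aux G hG t k C hpart hcomp α hprf
end

section
/- Let G=(V,E) be a connected finite simple graph of order n, let X ⊆ V be such that the induced subgraph G[X] is connected, and let G_1,…,G_r be the nontrivial connected components of G−X, ordered so that |V(G_i)| ≤ |V(G_{i+1})| for 1 ≤ i ≤ r−1. If k is a positive integer with k+n−1 ≥ prf(G), then r ≤ k+2 and Σ_{i=1}^{r−2} |V(G_i)| ≤ 2k. -/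
variable {V : Type*}

/-- Along a walk whose endpoints straddle the cut `i` (w.r.t. a labeling `g`), there is an
edge straddling the cut, whose later endpoint is reachable from the start. -/
private lemma exists_cross_edge {W : Type*} {H : SimpleGraph W} (g : W → ℕ) {u w : W}
    (p : H.Walk u w) (i : ℕ) :
    g u ≤ i → i < g w → ∃ a b, H.Adj a b ∧ g a ≤ i ∧ i < g b ∧ H.Reachable u b := by
  induction p with
  | nil => intro h1 h2; omega
  | @cons u x w h q ih =>
    intro h1 h2
    by_cases hx : g x ≤ i
    · obtain ⟨a, b, hab, ha, hb, hr⟩ := ih hx h2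
      exact ⟨a, b, hab, ha, hb, h.reachable.trans hr⟩
    · exact ⟨u, x, h, h1, by omega, h.reachable⟩

/-- Along a walk from a vertex outside `X` to a vertex of `X`, there is an edge from a
vertex `u ∉ X` (in the same component of `G - X` as the start) to a vertex of `X`. -/
private lemma exists_attach {G : SimpleGraph V} {X : Set V} {y z : V} (p : G.Walk y z) :
    ∀ (hy : y ∈ Xᶜ), z ∈ X →
      ∃ (u x : V) (hu : u ∈ Xᶜ), G.Adj u x ∧ x ∈ X ∧
        (G.induce Xᶜ).Reachable ⟨y, hy⟩ ⟨u, hu⟩ := by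
  induction p with
  | nil => intro hy hz; exact absurd hz hy
  | @cons y c z h q ih =>
    intro hy hz
    by_cases hc : c ∈ X
    · exact ⟨y, c, hy, h, hc, SimpleGraph.Reachable.refl _⟩
    · obtain ⟨u, x, hu, hadj, hx, hr⟩ := ih hc hz
      have hyc : (G.induce Xᶜ).Adj ⟨y, hy⟩ ⟨c, hc⟩ := h
      exact ⟨u, x, hu, hadj, hx, hyc.reachable.trans hr⟩

private lemma strictMono_fin_le' {m r : ℕ} {h : Fin m → Fin r} (hs : StrictMono h) :
    ∀ (t : ℕ) (ht : t < m), t ≤ (h ⟨t, ht⟩ : ℕ) := by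
  intro t
  induction t with
  | zero => intro ht; exact Nat.zero_le _
  | succ s ih =>
    intro ht
    have hsm : s < m := by omega
    have hlt : (⟨s, hsm⟩ : Fin m) < ⟨s + 1, ht⟩ := by simp [Fin.lt_def]
    have h2 := hs hlt
    have h3 := ih hsm
    rw [Fin.lt_def] at h2
    omega

private lemma strictMono_fin_le {m r : ℕ} {h : Fin m → Fin r} (hs : StrictMono h)
    (t : Fin m) : (t : ℕ) ≤ (h t : ℕ) := by
  have := strictMono_fin_le' hs t.1 t.2
  simpa using this

set_option maxHeartbeats 2000000 in
/-- Lemma 2.8: if `G[X]` is connected and `G_1, …, G_r` are the nontrivial connected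
components of `G - X` ordered by nondecreasing size, and `prf(G) ≤ k + n - 1`, then
`r ≤ k + 2` and the `r - 2` smallest components together have at most `2k` vertices. -/
theorem nontrivial_components_bound [Fintype V] (G : SimpleGraph V) (hG : G.Connected)
    (X : Set V) (hX : (G.induce X).Connected)
    (k r : ℕ) (hk : 1 ≤ k)
    -- f enumerates the nontrivial connected components of G - X
    (f : Fin r ≃ {c : (G.induce Xᶜ).ConnectedComponent // 1 < c.supp.ncard})
    -- ordered by nondecreasing number of vertices
    (hmono : ∀ i j : Fin r, i ≤ j → ((f i : (G.induce Xᶜ).ConnectedComponent).supp.ncard ≤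
      ((f j : (G.induce Xᶜ).ConnectedComponent).supp.ncard)))
    (hprf : profile G ≤ k + Fintype.card V - 1) :
    r ≤ k + 2 ∧
      ∑ i ∈ Finset.univ.filter (fun i : Fin r => (i : ℕ) < r - 2),
        ((f i : (G.induce Xᶜ).ConnectedComponent).supp.ncard) ≤ 2 * k := by
  classical
  obtain ⟨⟨x₁, hx₁⟩⟩ := hX.nonempty
  have hVne : Nonempty V := ⟨x₁⟩
  set n := Fintype.card V with hn
  have hn1 : 1 ≤ n := Fintype.card_pos
  -- an optimal ordering
  have hαex : ∃ α : V ≃ Fin n, ordProfile G α = profile G := by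
    have h := Nat.sInf_mem
      (s := {p : ℕ | ∃ α : V ≃ Fin (Fintype.card V), ordProfile G α = p})
      ⟨_, ⟨Fintype.equivFin V, rfl⟩⟩
    exact h
  obtain ⟨α, hα⟩ := hαex
  set pos : V → ℕ := fun v => (α v : ℕ) with hpos
  have hposlt : ∀ v, pos v < n := fun v => (α v).isLt
  have hposinj : Function.Injective pos := fun v w h => α.injective (Fin.ext h)
  have hnm_le_pos : ∀ v, nbhdMin G α v ≤ pos v := fun v => Nat.sInf_le ⟨v, Or.inl rfl, rfl⟩
  have hnm_le_adj : ∀ {u v : V}, G.Adj u v → nbhdMin G α v ≤ pos u :=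
    fun {u v} h => Nat.sInf_le ⟨u, Or.inr h, rfl⟩
  -- boundary sets
  set S : ℕ → Finset V :=
    fun i => Finset.univ.filter (fun v => nbhdMin G α v ≤ i ∧ i < pos v) with hS
  -- the profile as a sum over cuts
  have hcard1 : ∀ v : V, vtxProfile G α v
      = ((Finset.range (n-1)).filter (fun i => nbhdMin G α v ≤ i ∧ i < pos v)).card := by
    intro v
    have he : ((Finset.range (n-1)).filter (fun i => nbhdMin G α v ≤ i ∧ i < pos v))
        = Finset.Ico (nbhdMin G α v) (pos v) := by
      ext j
      simp only [Finset.mem_filter, Finset.mem_range, Finset.mem_Ico]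
      have := hposlt v
      omega
    rw [vtxProfile, he, Nat.card_Ico]
  have hsum : ∑ i ∈ Finset.range (n-1), (S i).card = ordProfile G α := by
    calc ∑ i ∈ Finset.range (n-1), (S i).card
        = ∑ i ∈ Finset.range (n-1), ∑ v : V,
            if nbhdMin G α v ≤ i ∧ i < pos v then 1 else 0 := by
          refine Finset.sum_congr rfl fun i _ => ?_
          rw [hS]; exact Finset.card_filter _ _
      _ = ∑ v : V, ∑ i ∈ Finset.range (n-1),
            if nbhdMin G α v ≤ i ∧ i < pos v then 1 else 0 := Finset.sum_comm
      _ = ∑ v : V, vtxProfile G α v := by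
          refine Finset.sum_congr rfl fun v _ => ?_
          rw [hcard1 v, Finset.card_filter]
      _ = ordProfile G α := rfl
  -- component machinery
  have hsupp_ne : ∀ c : (G.induce Xᶜ).ConnectedComponent, c.supp.Nonempty := by
    intro c
    obtain ⟨v, hv⟩ := c.exists_rep
    exact ⟨v, by rwa [SimpleGraph.ConnectedComponent.mem_supp_iff]⟩
  set sval : Fin r → Set V :=
    fun j => Subtype.val '' ((f j : (G.induce Xᶜ).ConnectedComponent).supp) with hsval
  have hsval_ne : ∀ j, (pos '' sval j).Nonempty :=
    fun j => (((hsupp_ne _).image _).image _)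
  have hbddj : ∀ j, BddAbove (pos '' sval j) := by
    intro j
    refine ⟨n, ?_⟩
    rintro x ⟨v, -, rfl⟩
    exact (hposlt v).le
  set mm : Fin r → ℕ := fun j => sInf (pos '' sval j) with hmm
  set MM : Fin r → ℕ := fun j => sSup (pos '' sval j) with hMM
  have hmm_mem : ∀ j, ∃ v ∈ sval j, pos v = mm j := fun j => Nat.sInf_mem (hsval_ne j)
  have hMM_mem : ∀ j, ∃ v ∈ sval j, pos v = MM j :=
    fun j => Nat.sSup_mem (hsval_ne j) (hbddj j)
  have hmm_le : ∀ j v, v ∈ sval j → mm j ≤ pos v := fun j v hv => Nat.sInf_le ⟨v, hv, rfl⟩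
  have hle_MM : ∀ j v, v ∈ sval j → pos v ≤ MM j :=
    fun j v hv => le_csSup (hbddj j) ⟨v, hv, rfl⟩
  have hsval_sub : ∀ j v, v ∈ sval j → v ∈ Xᶜ := by
    rintro j v ⟨⟨v, hv⟩, -, rfl⟩; exact hv
  have hsval_comp : ∀ j v, v ∈ sval j → ∃ hv : v ∈ Xᶜ,
      (G.induce Xᶜ).connectedComponentMk ⟨v, hv⟩
        = (f j : (G.induce Xᶜ).ConnectedComponent) := by
    rintro j v ⟨⟨v, hv⟩, hm, rfl⟩
    exact ⟨hv, (SimpleGraph.ConnectedComponent.mem_supp_iff _ _).1 hm⟩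
  have hmem_sval : ∀ (j : Fin r) (v : V) (hv : v ∈ Xᶜ),
      (G.induce Xᶜ).connectedComponentMk ⟨v, hv⟩
        = (f j : (G.induce Xᶜ).ConnectedComponent) → v ∈ sval j := by
    intro j v hv h
    exact ⟨⟨v, hv⟩, (SimpleGraph.ConnectedComponent.mem_supp_iff _ _).2 h, rfl⟩
  have hsval_inj : ∀ j1 j2 v, v ∈ sval j1 → v ∈ sval j2 → j1 = j2 := by
    intro j1 j2 v h1 h2
    obtain ⟨hv, e1⟩ := hsval_comp j1 v h1
    obtain ⟨hv2, e2⟩ := hsval_comp j2 v h2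
    have he : (f j1 : (G.induce Xᶜ).ConnectedComponent) = (f j2 : _) := by
      rw [← e1, ← e2]
    exact f.injective (Subtype.ext he)
  -- positions of X
  set A := sInf (pos '' X) with hA
  set B := sSup (pos '' X) with hB
  have hXim_ne : (pos '' X).Nonempty := ⟨pos x₁, x₁, hx₁, rfl⟩
  have hXbdd : BddAbove (pos '' X) := by
    refine ⟨n, ?_⟩; rintro x ⟨v, -, rfl⟩; exact (hposlt v).le
  have hA_le : ∀ x ∈ X, A ≤ pos x := fun x hx => Nat.sInf_le ⟨x, hx, rfl⟩
  have hle_B : ∀ x ∈ X, pos x ≤ B := fun x hx => le_csSup hXbdd ⟨x, hx, rfl⟩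
  -- a crossing component provides a boundary vertex inside itself
  have hcrossb : ∀ (i : ℕ) (j : Fin r), mm j ≤ i → i < MM j →
      ∃ v, v ∈ S i ∧ v ∈ sval j := by
    intro i j h1 h2
    obtain ⟨u, hu, hu'⟩ := hmm_mem j
    obtain ⟨w, hw, hw'⟩ := hMM_mem j
    obtain ⟨hu2, hcu⟩ := hsval_comp j u hu
    obtain ⟨hw2, hcw⟩ := hsval_comp j w hw
    have hreach : (G.induce Xᶜ).Reachable ⟨u, hu2⟩ ⟨w, hw2⟩ :=
      SimpleGraph.ConnectedComponent.exact (by rw [hcu, hcw])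
    obtain ⟨p⟩ := hreach
    obtain ⟨a, b, hab, ha, hb, hr⟩ :=
      exists_cross_edge (fun x : ↥(Xᶜ) => pos x.val) p i
        (by simpa [hu'] using h1) (by simpa [hw'] using h2)
    have hadj : G.Adj a.val b.val := hab
    refine ⟨b.val, ?_, ?_⟩
    · rw [hS]
      simp only [Finset.mem_filter, Finset.mem_univ, true_and]
      exact ⟨le_trans (hnm_le_adj hadj) ha, hb⟩
    · refine hmem_sval j b.val b.2 ?_
      rw [← hcu]
      exact (SimpleGraph.ConnectedComponent.sound hr).symm
  -- choice of boundary vertices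
  set φ : ℕ → Fin r → V := fun i j =>
    if h : ∃ v, v ∈ S i ∧ v ∈ sval j then h.choose else x₁ with hφ
  have hφ_spec : ∀ i j, mm j ≤ i → i < MM j → φ i j ∈ S i ∧ φ i j ∈ sval j := by
    intro i j h1 h2
    have h := hcrossb i j h1 h2
    rw [hφ]
    simp only [dif_pos h]
    exact h.choose_spec
  set cross : ℕ → Finset (Fin r) :=
    fun i => Finset.univ.filter (fun j => mm j ≤ i ∧ i < MM j) with hcr
  have hcrmem : ∀ i j, j ∈ cross i ↔ (mm j ≤ i ∧ i < MM j) := by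
    intro i j; rw [hcr]; simp
  have hφinj : ∀ i, Set.InjOn (φ i) (cross i : Set (Fin r)) := by
    intro i j1 h1 j2 h2 he
    rw [Finset.mem_coe, hcrmem] at h1 h2
    exact hsval_inj j1 j2 _ (hφ_spec i j1 h1.1 h1.2).2 (he ▸ (hφ_spec i j2 h2.1 h2.2).2)
  have hinj : ∀ i, (cross i).card ≤ (S i).card := by
    intro i
    refine Finset.card_le_card_of_injOn (φ i) ?_ (hφinj i)
    intro j hj
    rw [Finset.mem_coe, hcrmem] at hj
    exact (hφ_spec i j hj.1 hj.2).1
  have hinj1 : ∀ (i : ℕ) (x₀ : V), x₀ ∈ S i → (∀ j ∈ cross i, x₀ ∉ sval j) →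
      (cross i).card + 1 ≤ (S i).card := by
    intro i x₀ hx0 hx0'
    have himg : ((cross i).image (φ i)) ⊆ S i := by
      intro v hv
      obtain ⟨j, hj, rfl⟩ := Finset.mem_image.1 hv
      rw [hcrmem] at hj
      exact (hφ_spec i j hj.1 hj.2).1
    have hcardim : ((cross i).image (φ i)).card = (cross i).card :=
      Finset.card_image_of_injOn (hφinj i)
    have hnotmem : x₀ ∉ (cross i).image (φ i) := by
      intro hmem
      obtain ⟨j, hj, he⟩ := Finset.mem_image.1 hmem
      have hj' := hj; rw [hcrmem] at hj'
      exact hx0' j hj (he ▸ (hφ_spec i j hj'.1 hj'.2).2)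
    calc (cross i).card + 1
        = (insert x₀ ((cross i).image (φ i))).card := by
          rw [Finset.card_insert_of_notMem hnotmem, hcardim]
      _ ≤ (S i).card := Finset.card_le_card (Finset.insert_subset hx0 himg)
  -- excluded components: those containing the first or last position
  set excl : Fin r → Prop :=
    fun j => (∃ v ∈ sval j, pos v = 0) ∨ (∃ v ∈ sval j, pos v = n - 1) with hexcl
  set cross' : ℕ → Finset (Fin r) :=
    fun i => Finset.univ.filter (fun j => (mm j ≤ i ∧ i < MM j) ∧ ¬ excl j) with hcr'
  have hcr'mem : ∀ i j, j ∈ cross' i ↔ ((mm j ≤ i ∧ i < MM j) ∧ ¬ excl j) := by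
    intro i j; rw [hcr']; simp
  have hsubc : ∀ i, cross' i ⊆ cross i := by
    intro i j hj
    rw [hcr'mem] at hj
    rw [hcrmem]
    exact hj.1
  -- the step through an excluded crossing component
  have hstep : ∀ (i : ℕ) (j : Fin r), j ∈ cross i → excl j →
      (cross' i).card + 1 ≤ (S i).card := by
    intro i j hj hexj
    have hjn : j ∉ cross' i := by
      rw [hcr'mem]
      intro h
      exact h.2 hexj
    calc (cross' i).card + 1 = (insert j (cross' i)).card :=
          (Finset.card_insert_of_notMem hjn).symm
      _ ≤ (cross i).card := by
          refine Finset.card_le_card ?_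
          intro t ht
          rcases Finset.mem_insert.1 ht with rfl | ht'
          · exact hj
          · exact hsubc i ht'
      _ ≤ (S i).card := hinj i
  -- the step through an extra boundary vertex
  have hstep2 : ∀ (i : ℕ) (x₀ : V), x₀ ∈ S i → (∀ j ∈ cross i, x₀ ∉ sval j) →
      (cross' i).card + 1 ≤ (S i).card := by
    intro i x₀ h1 h2
    exact le_trans (Nat.add_le_add_right (Finset.card_le_card (hsubc i)) 1)
      (hinj1 i x₀ h1 h2)
  -- KEY: per-cut inequality
  have key : ∀ i, i < n - 1 → (cross' i).card + 1 ≤ (S i).card := by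
    intro i hi
    rcases lt_or_ge i A with hiA | hiA
    · by_cases hbon : ∃ c : (G.induce Xᶜ).ConnectedComponent, ∀ v ∈ c.supp, pos v.val ≤ i
      · -- a component lies entirely at positions ≤ i: it attaches to X, giving a boundary
        -- vertex inside X
        obtain ⟨c, hc⟩ := hbon
        obtain ⟨u', hu'⟩ := hsupp_ne c
        obtain ⟨p⟩ := hG.preconnected u'.val x₁
        obtain ⟨u, x, hu, hadj, hx, hr⟩ := exists_attach p u'.2 hx₁
        have humem : (⟨u, hu⟩ : ↥(Xᶜ)) ∈ c.supp := by
          rw [SimpleGraph.ConnectedComponent.mem_supp_iff]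
          have h1 : (G.induce Xᶜ).connectedComponentMk u' = c :=
            (SimpleGraph.ConnectedComponent.mem_supp_iff _ _).1 hu'
          rw [← h1]
          exact (SimpleGraph.ConnectedComponent.sound hr).symm
        have hx0S : x ∈ S i := by
          rw [hS]
          simp only [Finset.mem_filter, Finset.mem_univ, true_and]
          constructor
          · exact le_trans (hnm_le_adj hadj) (hc _ humem)
          · exact lt_of_lt_of_le hiA (hA_le x hx)
        refine hstep2 i x hx0S ?_
        intro j _ hxj
        exact (hsval_sub j x hxj) hx
      · -- no component lies entirely at positions ≤ i: the component of the vertex at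
        -- position 0 crosses the cut and is excluded
        push_neg at hbon
        set v₀ := α.symm ⟨0, by omega⟩ with hv₀
        have hpos0 : pos v₀ = 0 := by rw [hpos, hv₀]; simp
        have hv0X : v₀ ∈ Xᶜ := by
          intro hmem
          have := hA_le v₀ hmem
          omega
        obtain ⟨w, hwsupp, hwi⟩ := hbon ((G.induce Xᶜ).connectedComponentMk ⟨v₀, hv0X⟩)
        have hv0supp : (⟨v₀, hv0X⟩ : ↥(Xᶜ)) ∈
            ((G.induce Xᶜ).connectedComponentMk ⟨v₀, hv0X⟩).supp := by
          rw [SimpleGraph.ConnectedComponent.mem_supp_iff]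
        have hnontriv : 1 < ((G.induce Xᶜ).connectedComponentMk ⟨v₀, hv0X⟩).supp.ncard := by
          rw [Set.one_lt_ncard_iff (Set.toFinite _)]
          refine ⟨⟨v₀, hv0X⟩, w, hv0supp, hwsupp, ?_⟩
          intro he
          rw [← he] at hwi
          simp only at hwi
          omega
        set j₀ := f.symm ⟨_, hnontriv⟩ with hj₀
        have hcompj : (f j₀ : (G.induce Xᶜ).ConnectedComponent)
            = (G.induce Xᶜ).connectedComponentMk ⟨v₀, hv0X⟩ := by
          rw [hj₀, Equiv.apply_symm_apply]
        have hv0sval : v₀ ∈ sval j₀ := hmem_sval j₀ v₀ hv0X hcompj.symm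
        have hwsval : (w : V) ∈ sval j₀ := by
          refine hmem_sval j₀ w.val w.2 ?_
          rw [hcompj]
          exact (SimpleGraph.ConnectedComponent.mem_supp_iff _ _).1
            (by simpa using hwsupp)
        have hmmj : mm j₀ ≤ i := by
          have := hmm_le j₀ v₀ hv0sval
          omega
        have hMMj : i < MM j₀ := lt_of_lt_of_le hwi (hle_MM j₀ w.val hwsval)
        refine hstep i j₀ ((hcrmem i j₀).2 ⟨hmmj, hMMj⟩) ?_
        rw [hexcl]
        exact Or.inl ⟨v₀, hv0sval, hpos0⟩
    · rcases lt_or_ge i B with hiB | hiB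
      · -- A ≤ i < B: X itself crosses the cut
        obtain ⟨xa, hxa, hxa'⟩ := Nat.sInf_mem hXim_ne
        obtain ⟨xb, hxb, hxb'⟩ := Nat.sSup_mem hXim_ne hXbdd
        obtain ⟨p⟩ := hX.preconnected ⟨xa, hxa⟩ ⟨xb, hxb⟩
        obtain ⟨a, b, hab, ha, hb, -⟩ :=
          exists_cross_edge (fun x : ↥X => pos x.val) p i
            (by simpa [hxa'] using hiA) (by simpa [hxb'] using hiB)
        have hadj : G.Adj a.val b.val := hab
        have hbS : b.val ∈ S i := by
          rw [hS]
          simp only [Finset.mem_filter, Finset.mem_univ, true_and]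
          exact ⟨le_trans (hnm_le_adj hadj) ha, hb⟩
        refine hstep2 i b.val hbS ?_
        intro j _ hbj
        exact (hsval_sub j b.val hbj) b.2
      · -- B ≤ i
        by_cases hbon : ∃ c : (G.induce Xᶜ).ConnectedComponent, ∀ v ∈ c.supp, i < pos v.val
        · -- a component lies entirely at positions > i: its attaching vertex is a boundary
          -- vertex inside the component, which does not cross the cut
          obtain ⟨c, hc⟩ := hbon
          obtain ⟨u', hu'⟩ := hsupp_ne c
          obtain ⟨p⟩ := hG.preconnected u'.val x₁
          obtain ⟨u, x, hu, hadj, hx, hr⟩ := exists_attach p u'.2 hx₁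
          have humem : (⟨u, hu⟩ : ↥(Xᶜ)) ∈ c.supp := by
            rw [SimpleGraph.ConnectedComponent.mem_supp_iff]
            have h1 : (G.induce Xᶜ).connectedComponentMk u' = c :=
              (SimpleGraph.ConnectedComponent.mem_supp_iff _ _).1 hu'
            rw [← h1]
            exact (SimpleGraph.ConnectedComponent.sound hr).symm
          have huS : u ∈ S i := by
            rw [hS]
            simp only [Finset.mem_filter, Finset.mem_univ, true_and]
            constructor
            · exact le_trans (hnm_le_adj hadj.symm) (le_trans (hle_B x hx) hiB)
            · exact hc _ humem
          refine hstep2 i u huS ?_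
          intro j hj huj
          obtain ⟨hu2, hcu⟩ := hsval_comp j u huj
          have hceq : (f j : (G.induce Xᶜ).ConnectedComponent) = c := by
            rw [← hcu]
            exact (SimpleGraph.ConnectedComponent.mem_supp_iff _ _).1 humem
          obtain ⟨v, hv, hv'⟩ := hmm_mem j
          obtain ⟨hv2, hcv⟩ := hsval_comp j v hv
          have hvc : (⟨v, hv2⟩ : ↥(Xᶜ)) ∈ c.supp := by
            rw [SimpleGraph.ConnectedComponent.mem_supp_iff, hcv, hceq]
          have := hc _ hvc
          rw [hcrmem] at hj
          simp only at this
          omega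
        · -- no component lies entirely at positions > i: the component of the vertex at
          -- position n-1 crosses the cut and is excluded
          push_neg at hbon
          set v₁ := α.symm ⟨n - 1, by omega⟩ with hv₁
          have hpos1 : pos v₁ = n - 1 := by rw [hpos, hv₁]; simp
          have hv1X : v₁ ∈ Xᶜ := by
            intro hmem
            have := hle_B v₁ hmem
            omega
          obtain ⟨w, hwsupp, hwi⟩ := hbon ((G.induce Xᶜ).connectedComponentMk ⟨v₁, hv1X⟩)
          have hv1supp : (⟨v₁, hv1X⟩ : ↥(Xᶜ)) ∈
              ((G.induce Xᶜ).connectedComponentMk ⟨v₁, hv1X⟩).supp := by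
            rw [SimpleGraph.ConnectedComponent.mem_supp_iff]
          have hnontriv : 1 < ((G.induce Xᶜ).connectedComponentMk ⟨v₁, hv1X⟩).supp.ncard := by
            rw [Set.one_lt_ncard_iff (Set.toFinite _)]
            refine ⟨⟨v₁, hv1X⟩, w, hv1supp, hwsupp, ?_⟩
            intro he
            rw [← he] at hwi
            simp only at hwi
            omega
          set j₁ := f.symm ⟨_, hnontriv⟩ with hj₁
          have hcompj : (f j₁ : (G.induce Xᶜ).ConnectedComponent)
              = (G.induce Xᶜ).connectedComponentMk ⟨v₁, hv1X⟩ := by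
            rw [hj₁, Equiv.apply_symm_apply]
          have hv1sval : v₁ ∈ sval j₁ := hmem_sval j₁ v₁ hv1X hcompj.symm
          have hwsval : (w : V) ∈ sval j₁ := by
            refine hmem_sval j₁ w.val w.2 ?_
            rw [hcompj]
            exact (SimpleGraph.ConnectedComponent.mem_supp_iff _ _).1
              (by simpa using hwsupp)
          have hmmj : mm j₁ ≤ i := le_trans (hmm_le j₁ w.val hwsval) hwi
          have hMMj : i < MM j₁ := by
            have := hle_MM j₁ v₁ hv1sval
            omega
          refine hstep i j₁ ((hcrmem i j₁).2 ⟨hmmj, hMMj⟩) ?_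
          rw [hexcl]
          exact Or.inr ⟨v₁, hv1sval, hpos1⟩
  -- total excess bound
  have hEk : ∑ i ∈ Finset.range (n-1), (cross' i).card ≤ k := by
    have h1 : ∑ i ∈ Finset.range (n-1), ((cross' i).card + 1)
        ≤ ∑ i ∈ Finset.range (n-1), (S i).card :=
      Finset.sum_le_sum (fun i hi => key i (Finset.mem_range.1 hi))
    rw [Finset.sum_add_distrib, Finset.sum_const, Finset.card_range, smul_eq_mul,
      mul_one, hsum, hα] at h1
    have h2 := le_trans h1 hprf
    omega
  -- regrouping by components
  set T : Finset (Fin r) := Finset.univ.filter (fun j => ¬ excl j) with hT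
  have hswap : ∑ i ∈ Finset.range (n-1), (cross' i).card = ∑ j ∈ T, (MM j - mm j) := by
    calc ∑ i ∈ Finset.range (n-1), (cross' i).card
        = ∑ i ∈ Finset.range (n-1), ∑ j ∈ T,
            if mm j ≤ i ∧ i < MM j then 1 else 0 := by
          refine Finset.sum_congr rfl fun i _ => ?_
          rw [hcr', hT, ← Finset.card_filter, Finset.filter_filter]
          congr 1
          ext j
          simp only [Finset.mem_filter, Finset.mem_univ, true_and]
          tauto
      _ = ∑ j ∈ T, ∑ i ∈ Finset.range (n-1),
            if mm j ≤ i ∧ i < MM j then 1 else 0 := Finset.sum_comm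
      _ = ∑ j ∈ T, (MM j - mm j) := by
          refine Finset.sum_congr rfl fun j _ => ?_
          rw [← Finset.card_filter]
          have hMMle : MM j ≤ n - 1 := by
            obtain ⟨v, hv, hv'⟩ := hMM_mem j
            have := hposlt v
            omega
          have he : (Finset.range (n-1)).filter (fun i => mm j ≤ i ∧ i < MM j)
              = Finset.Ico (mm j) (MM j) := by
            ext t
            simp only [Finset.mem_filter, Finset.mem_range, Finset.mem_Ico]
            omega
          rw [he, Nat.card_Ico]
  -- size of each component versus its span
  have hsize : ∀ j : Fin r,
      (f j : (G.induce Xᶜ).ConnectedComponent).supp.ncard - 1 ≤ MM j - mm j := by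
    intro j
    have h1 : (f j : (G.induce Xᶜ).ConnectedComponent).supp.ncard
        = (pos '' sval j).ncard := by
      rw [hsval, Set.ncard_image_of_injective _ hposinj,
        Set.ncard_image_of_injective _ Subtype.val_injective]
    have hsub2 : pos '' sval j ⊆ Set.Icc (mm j) (MM j) := by
      rintro t ⟨v, hv, rfl⟩
      exact ⟨hmm_le j v hv, hle_MM j v hv⟩
    have h2 : (pos '' sval j).ncard ≤ MM j + 1 - mm j := by
      calc (pos '' sval j).ncard ≤ (Set.Icc (mm j) (MM j)).ncard :=
            Set.ncard_le_ncard hsub2 (Set.finite_Icc _ _)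
        _ = MM j + 1 - mm j := by
            rw [← Finset.coe_Icc, Set.ncard_coe_finset, Nat.card_Icc]
    have h3 : mm j ≤ MM j := by
      obtain ⟨v, hv, hv'⟩ := hMM_mem j
      have := hmm_le j v hv
      omega
    omega
  have hT_k : ∑ j ∈ T, ((f j : (G.induce Xᶜ).ConnectedComponent).supp.ncard - 1) ≤ k := by
    refine le_trans (Finset.sum_le_sum fun j _ => hsize j) ?_
    rw [← hswap]
    exact hEk
  -- at most two excluded components
  have hexcl2 : (Finset.univ.filter excl).card ≤ 2 := by
    have h0 : (Finset.univ.filter (fun j : Fin r => ∃ v ∈ sval j, pos v = 0)).card ≤ 1 := by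
      refine Finset.card_le_one.2 ?_
      intro j1 h1 j2 h2
      simp only [Finset.mem_filter, Finset.mem_univ, true_and] at h1 h2
      obtain ⟨v1, hv1, hp1⟩ := h1
      obtain ⟨v2, hv2, hp2⟩ := h2
      have : v1 = v2 := hposinj (by omega)
      exact hsval_inj j1 j2 v1 hv1 (this ▸ hv2)
    have h1 : (Finset.univ.filter (fun j : Fin r => ∃ v ∈ sval j, pos v = n - 1)).card ≤ 1 := by
      refine Finset.card_le_one.2 ?_
      intro j1 hh1 j2 hh2
      simp only [Finset.mem_filter, Finset.mem_univ, true_and] at hh1 hh2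
      obtain ⟨v1, hv1, hp1⟩ := hh1
      obtain ⟨v2, hv2, hp2⟩ := hh2
      have : v1 = v2 := hposinj (by omega)
      exact hsval_inj j1 j2 v1 hv1 (this ▸ hv2)
    have hsub3 : Finset.univ.filter excl ⊆
        (Finset.univ.filter (fun j : Fin r => ∃ v ∈ sval j, pos v = 0))
          ∪ (Finset.univ.filter (fun j : Fin r => ∃ v ∈ sval j, pos v = n - 1)) := by
      intro j hj
      simp only [Finset.mem_filter, Finset.mem_univ, true_and, Finset.mem_union] at hj ⊢
      rw [hexcl] at hj
      exact hj
    calc (Finset.univ.filter excl).card ≤ _ := Finset.card_le_card hsub3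
      _ ≤ _ := Finset.card_union_le _ _
      _ ≤ 2 := by omega
  have hTcard : r - 2 ≤ T.card := by
    have hsplit : (Finset.univ.filter excl).card + T.card = r := by
      rw [hT]
      rw [Finset.card_filter_add_card_filter_not]
      simp
    omega
  -- every nontrivial component contributes at least one to the excess
  have hT1 : T.card ≤ k := by
    refine le_trans ?_ hT_k
    rw [Finset.card_eq_sum_ones]
    refine Finset.sum_le_sum fun j _ => ?_
    have := (f j).2
    omega
  have part1 : r ≤ k + 2 := by omega
  -- the sum over the r-2 smallest components
  set g : Fin r → ℕ := fun j => (f j : (G.induce Xᶜ).ConnectedComponent).supp.ncard with hg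
  set F2 : Finset (Fin r) := Finset.univ.filter (fun j : Fin r => (j : ℕ) < r - 2) with hF2
  have hF2card : F2.card ≤ r - 2 := by
    have : F2.card ≤ (Finset.range (r - 2)).card := by
      refine Finset.card_le_card_of_injOn (fun j => (j : ℕ)) ?_ ?_
      · intro j hj
        rw [hF2] at hj
        simp only [Finset.coe_filter, Finset.mem_filter, Finset.mem_univ, true_and] at hj
        exact Finset.mem_range.2 hj
      · intro j1 _ j2 _ he
        exact Fin.ext he
    simpa using this
  have hsum2 : ∑ j ∈ F2, (g j - 1) ≤ k := by
    rcases Nat.eq_zero_or_pos T.card with hTc | hTc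
    · -- T empty forces r ≤ 2, so F2 is empty
      have : F2 = ∅ := by
        rw [Finset.eq_empty_iff_forall_notMem]
        intro j hj
        rw [hF2] at hj
        simp only [Finset.mem_filter, Finset.mem_univ, true_and] at hj
        omega
      simp [this]
    · set ψ := T.orderEmbOfFin rfl with hψ
      have hψT : ∀ t, ψ t ∈ T := fun t => Finset.orderEmbOfFin_mem T rfl t
      have hψle : ∀ t : Fin T.card, (t : ℕ) ≤ (ψ t : ℕ) :=
        fun t => strictMono_fin_le (OrderEmbedding.strictMono ψ) t
      set Ψ : Fin r → Fin r := fun j =>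
        if h : (j : ℕ) < T.card then ψ ⟨j, h⟩ else j with hΨ
      have hΨspec : ∀ j ∈ F2, Ψ j ∈ T ∧ j ≤ Ψ j := by
        intro j hj
        rw [hF2] at hj
        simp only [Finset.mem_filter, Finset.mem_univ, true_and] at hj
        have hlt : (j : ℕ) < T.card := by omega
        rw [hΨ]
        simp only [dif_pos hlt]
        exact ⟨hψT _, by
          rw [Fin.le_def]
          exact hψle ⟨j, hlt⟩⟩
      have hΨinj : ∀ j1 ∈ F2, ∀ j2 ∈ F2, Ψ j1 = Ψ j2 → j1 = j2 := by
        intro j1 hj1 j2 hj2 he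
        rw [hF2] at hj1 hj2
        simp only [Finset.mem_filter, Finset.mem_univ, true_and] at hj1 hj2
        have hlt1 : (j1 : ℕ) < T.card := by omega
        have hlt2 : (j2 : ℕ) < T.card := by omega
        rw [hΨ] at he
        simp only [dif_pos hlt1, dif_pos hlt2] at he
        have := ψ.injective he
        have := Fin.mk.inj_iff.1 this
        exact Fin.ext this
      calc ∑ j ∈ F2, (g j - 1)
          ≤ ∑ j ∈ F2, (g (Ψ j) - 1) := by
            refine Finset.sum_le_sum fun j hj => ?_
            exact Nat.sub_le_sub_right (hmono j (Ψ j) (hΨspec j hj).2) 1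
        _ = ∑ j ∈ F2.image Ψ, (g j - 1) := by rw [Finset.sum_image hΨinj]
        _ ≤ ∑ j ∈ T, (g j - 1) := by
            refine Finset.sum_le_sum_of_subset ?_
            intro t ht
            obtain ⟨j, hj, rfl⟩ := Finset.mem_image.1 ht
            exact (hΨspec j hj).1
        _ ≤ k := hT_k
  have part2 : ∑ j ∈ F2, g j ≤ 2 * k := by
    have he : ∀ j ∈ F2, g j = (g j - 1) + 1 := by
      intro j _
      have h1 : 1 < g j := by
        simp only [hg]
        exact (f j).2
      omega
    calc ∑ j ∈ F2, g j = ∑ j ∈ F2, ((g j - 1) + 1) := Finset.sum_congr rfl he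
      _ = (∑ j ∈ F2, (g j - 1)) + F2.card := by
          rw [Finset.sum_add_distrib, Finset.sum_const, smul_eq_mul, mul_one]
      _ ≤ k + (r - 2) := add_le_add hsum2 hF2card
      _ ≤ 2 * k := by omega
  exact ⟨part1, part2⟩
end

section
/- Let G be a connected finite simple graph, α an ordering of G, and ({x},Y) an α-consecutive pair such that every vertex in Y has degree 1 and is adjacent to x. Then the ordering β = swap_{Y,{x}}(α) satisfies prf_β(G) ≤ prf_α(G). -/
variable {V : Type*}

/-- The edge `uv` belongs to `E_α(G)`: it is an edge and one endpoint realizes the minimum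
position over the closed neighborhood of the other. -/
noncomputable def memEalpha {n : ℕ} (G : SimpleGraph V) (α : V ≃ Fin n) (u v : V) : Prop :=
  G.Adj u v ∧ ((α u : ℕ) = nbhdMin G α v ∨ (α v : ℕ) = nbhdMin G α u)

/-- `E^r_α(X)`: edges `uv ∈ E_α(G)` with `u ∈ X`, `v ∉ X` and `α(u) < α(v)`. -/
noncomputable def Eright {n : ℕ} (G : SimpleGraph V) (α : V ≃ Fin n) (X : Set V) :
    Set (V × V) :=
  {p | memEalpha G α p.1 p.2 ∧ p.1 ∈ X ∧ p.2 ∉ X ∧ (α p.1 : ℕ) < (α p.2 : ℕ)}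

/-- `E^l_α(X)`: edges `uv ∈ E_α(G)` with `u ∈ X`, `v ∉ X` and `α(u) > α(v)`. -/
noncomputable def Eleft {n : ℕ} (G : SimpleGraph V) (α : V ≃ Fin n) (X : Set V) :
    Set (V × V) :=
  {p | memEalpha G α p.1 p.2 ∧ p.1 ∈ X ∧ p.2 ∉ X ∧ (α p.2 : ℕ) < (α p.1 : ℕ)}

/-- `(X, Y)` is an `α`-consecutive pair: there are `1 ≤ a < b < c ≤ n` (here written with
`0`-based positions) such that `X` occupies positions `a, …, b-1` and `Y` positions `b, …, c`. -/
def ConsecPair {n : ℕ} (α : V ≃ Fin n) (X Y : Set V) : Prop :=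
  ∃ a b c : ℕ, a < b ∧ b < c ∧ c < n ∧
    (∀ v : V, v ∈ X ↔ a ≤ (α v : ℕ) ∧ (α v : ℕ) < b) ∧
    (∀ v : V, v ∈ Y ↔ b ≤ (α v : ℕ) ∧ (α v : ℕ) ≤ c)

/-- `β = swap_{Y,X}(α)`: the ordering obtained from `α` by swapping the consecutive blocks
`X` and `Y` (so that `Y` comes first), keeping the relative order inside each block and
fixing all other vertices. -/
def IsSwap {n : ℕ} (α β : V ≃ Fin n) (X Y : Set V) : Prop :=
  (∀ v : V, v ∉ X → v ∉ Y → β v = α v) ∧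
  (∀ u v : V, u ∈ X → v ∈ X → (β u < β v ↔ α u < α v)) ∧
  (∀ u v : V, u ∈ Y → v ∈ Y → (β u < β v ↔ α u < α v)) ∧
  (∀ y ∈ Y, ∀ x ∈ X, β y < β x)
/-- Lemma 3.3: swapping an `α`-consecutive pair `({x}, Y)`, where every vertex of `Y`
has degree one and is adjacent to `x`, does not increase the profile. -/
theorem swap_pendant_block_profile_le [Fintype V] (G : SimpleGraph V) (hG : G.Connected)
    (α β : V ≃ Fin (Fintype.card V)) (x : V) (Y : Set V)
    (hpair : ConsecPair α {x} Y)
    (hY : ∀ y ∈ Y, G.Adj x y ∧ (G.neighborSet y).ncard = 1)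
    (hswap : IsSwap α β {x} Y) :
    ordProfile G β ≤ ordProfile G α := by
  classical
  obtain ⟨a, b, c, hab, hbc, hcn, hX, hYpos⟩ := hpair
  obtain ⟨hout, hXord, hYord, hYX⟩ := hswap
  have han : a < Fintype.card V := by omega
  have hcn' : c < Fintype.card V := hcn
  -- α x = a
  have hax : (α x : ℕ) = a := by
    have hv : (α (α.symm ⟨a, han⟩) : ℕ) = a := by simp
    have hmem : α.symm ⟨a, han⟩ ∈ ({x} : Set V) :=
      (hX _).mpr ⟨le_of_eq hv.symm, by omega⟩
    have hex : α.symm ⟨a, han⟩ = x := hmem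
    rw [← hex, hv]
  have hxY : x ∉ Y := by
    intro h
    have := (hYpos x).mp h
    omega
  -- pendant structure
  have hNy : ∀ y ∈ Y, ∀ w, G.Adj w y → w = x := by
    intro y hy w hw
    obtain ⟨hadj, hcard⟩ := hY y hy
    obtain ⟨z, hz⟩ := Set.ncard_eq_one.mp hcard
    have hx1 : x ∈ G.neighborSet y := hadj.symm
    have hw1 : w ∈ G.neighborSet y := hw.symm
    rw [hz] at hx1 hw1
    simp only [Set.mem_singleton_iff] at hx1 hw1
    rw [hw1, hx1]
  have hβeq : ∀ v, v ≠ x → v ∉ Y → β v = α v := by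
    intro v hv1 hv2
    exact hout v (by simpa using hv1) hv2
  have hβY_lt : ∀ y ∈ Y, (β y : ℕ) < (β x : ℕ) := by
    intro y hy
    exact hYX y hy x rfl
  have hβ_ge_a : ∀ y ∈ Y, a ≤ (β y : ℕ) := by
    intro y hy
    by_contra h
    push_neg at h
    have hαw : (α (α.symm (β y)) : ℕ) = (β y : ℕ) := by simp
    have hwx : α.symm (β y) ≠ x := by
      intro he
      rw [he, hax] at hαw
      omega
    have hwY : α.symm (β y) ∉ Y := by
      intro hw
      have := (hYpos _).mp hw
      omega
    have hbw : β (α.symm (β y)) = β y := by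
      rw [hβeq _ hwx hwY]; simp
    have : α.symm (β y) = y := β.injective hbw
    exact hwY (by rw [this]; exact hy)
  have hβx : (β x : ℕ) = c := by
    have hβw : (β (β.symm ⟨c, hcn'⟩) : ℕ) = c := by simp
    by_cases hwx : β.symm ⟨c, hcn'⟩ = x
    · rw [hwx] at hβw; exact hβw
    by_cases hwY : β.symm ⟨c, hcn'⟩ ∈ Y
    · exfalso
      have h1 : (c : ℕ) < (β x : ℕ) := by
        have := hβY_lt _ hwY
        omega
      have hαv : (α (α.symm (β x)) : ℕ) = (β x : ℕ) := by simp
      have hvx : α.symm (β x) ≠ x := by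
        intro he
        rw [he, hax] at hαv
        omega
      have hvY : α.symm (β x) ∉ Y := by
        intro hw
        have := (hYpos _).mp hw
        omega
      have hbv : β (α.symm (β x)) = β x := by
        rw [hβeq _ hvx hvY]; simp
      exact hvx (β.injective hbv)
    · exfalso
      have h2 : β (β.symm ⟨c, hcn'⟩) = α (β.symm ⟨c, hcn'⟩) := hβeq _ hwx hwY
      have hαw : (α (β.symm ⟨c, hcn'⟩) : ℕ) = c := by rw [← h2]; exact hβw
      exact hwY ((hYpos _).mpr ⟨by omega, by omega⟩)
  obtain ⟨y0, hy0Y, hy0a⟩ : ∃ y0 ∈ Y, (β y0 : ℕ) = a := by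
    have hb0 : (β (β.symm ⟨a, han⟩) : ℕ) = a := by simp
    refine ⟨β.symm ⟨a, han⟩, ?_, hb0⟩
    by_cases h1 : β.symm ⟨a, han⟩ = x
    · rw [h1, hβx] at hb0; omega
    by_cases h2 : β.symm ⟨a, han⟩ ∈ Y
    · exact h2
    · exfalso
      have h3 : β (β.symm ⟨a, han⟩) = α (β.symm ⟨a, han⟩) := hβeq _ h1 h2
      have hα0 : (α (β.symm ⟨a, han⟩) : ℕ) = a := by rw [← h3]; exact hb0
      have : β.symm ⟨a, han⟩ ∈ ({x} : Set V) := (hX _).mpr ⟨by omega, by omega⟩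
      exact h1 this
  -- nbhdMin helpers
  have hmem_min : ∀ (γ : V ≃ Fin (Fintype.card V)) (z w : V), (w = z ∨ G.Adj w z) →
      nbhdMin G γ z ≤ (γ w : ℕ) := by
    intro γ z w h
    exact Nat.sInf_le ⟨w, h, rfl⟩
  have hmin_mem : ∀ (γ : V ≃ Fin (Fintype.card V)) (z : V),
      ∃ w, (w = z ∨ G.Adj w z) ∧ (γ w : ℕ) = nbhdMin G γ z := by
    intro γ z
    have hne : {m : ℕ | ∃ w, (w = z ∨ G.Adj w z) ∧ (γ w : ℕ) = m}.Nonempty :=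
      ⟨(γ z : ℕ), ⟨z, Or.inl rfl, rfl⟩⟩
    exact Nat.sInf_mem hne
  have hm_le_a : nbhdMin G α x ≤ a := by
    have := hmem_min α x x (Or.inl rfl)
    omega
  have hadj_y0 : G.Adj y0 x := ((hY y0 hy0Y).1).symm
  have hβmin_le_a : nbhdMin G β x ≤ a := by
    have := hmem_min β x y0 (Or.inr hadj_y0)
    omega
  have h_min_x : nbhdMin G β x = nbhdMin G α x := by
    apply le_antisymm
    · obtain ⟨w, hw, hweq⟩ := hmin_mem α x
      rcases hw with hw | hw
      · subst hw
        rw [hax] at hweq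
        omega
      · by_cases hwY : w ∈ Y
        · have := (hYpos w).mp hwY
          omega
        · have hwx : w ≠ x := G.ne_of_adj hw
          have : β w = α w := hβeq w hwx hwY
          have := hmem_min β x w (Or.inr hw)
          omega
    · obtain ⟨w, hw, hweq⟩ := hmin_mem β x
      rcases hw with hw | hw
      · subst hw
        rw [hβx] at hweq
        omega
      · by_cases hwY : w ∈ Y
        · have := hβ_ge_a w hwY
          omega
        · have hwx : w ≠ x := G.ne_of_adj hw
          have : β w = α w := hβeq w hwx hwY
          have := hmem_min α x w (Or.inr hw)
          omega
  -- profile facts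
  have hprfβY : ∀ y ∈ Y, vtxProfile G β y = 0 := by
    intro y hy
    have hlb : (β y : ℕ) ≤ nbhdMin G β y := by
      obtain ⟨w, hw, hweq⟩ := hmin_mem β y
      rcases hw with hw | hw
      · subst hw; omega
      · have hwx : w = x := hNy y hy w hw
        subst hwx
        rw [hβx] at hweq
        have := hβY_lt y hy
        rw [hβx] at this
        omega
    unfold vtxProfile
    omega
  have hycY : α.symm ⟨c, hcn'⟩ ∈ Y := by
    apply (hYpos _).mpr
    constructor <;> simp <;> omega
  have hprf_yc : c - a ≤ vtxProfile G α (α.symm ⟨c, hcn'⟩) := by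
    have h1 : nbhdMin G α (α.symm ⟨c, hcn'⟩) ≤ a := by
      have hadj : G.Adj x (α.symm ⟨c, hcn'⟩) := (hY _ hycY).1
      have := hmem_min α _ x (Or.inr hadj)
      omega
    have h2 : (α (α.symm ⟨c, hcn'⟩) : ℕ) = c := by simp
    unfold vtxProfile
    omega
  have hrest : ∀ z, z ≠ x → z ∉ Y → vtxProfile G β z ≤ vtxProfile G α z := by
    intro z hzx hzY
    have hβz : β z = α z := hβeq z hzx hzY
    have hmin : nbhdMin G α z ≤ nbhdMin G β z := by
      obtain ⟨w, hw, hweq⟩ := hmin_mem β z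
      by_cases hwx : w = x
      · rw [hwx] at hw hweq
        rw [hβx] at hweq
        have := hmem_min α z x hw
        omega
      · by_cases hwY : w ∈ Y
        · exfalso
          rcases hw with hw | hw
          · exact hzY (hw ▸ hwY)
          · exact hzx (hNy w hwY z hw.symm)
        · have : β w = α w := hβeq w hwx hwY
          have := hmem_min α z w hw
          omega
    unfold vtxProfile
    rw [hβz]
    omega
  -- assemble the sums
  have hprfβx : vtxProfile G β x = c - nbhdMin G α x := by
    unfold vtxProfile
    rw [hβx, h_min_x]
  have hprfαx : vtxProfile G α x = a - nbhdMin G α x := by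
    unfold vtxProfile
    rw [hax]
  set T : Finset V := Y.toFinset with hT
  have hxT : x ∉ T := by simpa [hT] using hxY
  have hsplit : ∀ f : V → ℕ, ∑ z : V, f z =
      (∑ z ∈ Finset.univ \ insert x T, f z) + (f x + ∑ z ∈ T, f z) := by
    intro f
    rw [← Finset.sum_insert hxT]
    rw [Finset.sum_sdiff (Finset.subset_univ (insert x T))]
  unfold ordProfile
  rw [hsplit (vtxProfile G β), hsplit (vtxProfile G α)]
  apply Nat.add_le_add
  · apply Finset.sum_le_sum
    intro z hz
    simp only [Finset.mem_sdiff, Finset.mem_insert, hT, Set.mem_toFinset] at hz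
    push_neg at hz
    exact hrest z hz.2.1 hz.2.2
  · have hsum0 : ∑ z ∈ T, vtxProfile G β z = 0 := by
      apply Finset.sum_eq_zero
      intro y hy
      exact hprfβY y (by simpa [hT] using hy)
    have hsum_ge : c - a ≤ ∑ z ∈ T, vtxProfile G α z := by
      refine le_trans hprf_yc ?_
      exact Finset.single_le_sum (f := vtxProfile G α) (fun _ _ => Nat.zero_le _)
        (by simpa [hT] using hycY)
    rw [hsum0, hprfβx, hprfαx]
    omega
end
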